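/- arXiv:1612.04111 — 6 statements merged into one kernel-verified Lean document; each statement's English description precedes it below -/
import Mathlib

section
/- Let δ > 0 and suppose (D_t)_{t≥0} is a sequence of finite subsets of X with D_0 = ∅ such that for every t either D_{t+1} ⊆ D_t, or D_{t+1} ⊆ D_t ∪ {x_t} for some x_t ∈ X whose feature image satisfies dist(φ(x_t), span{φ(d) : d ∈ D_t}) > δ. Then there exists a finite M^∞ such that |D_t| ≤ M^∞ for all t; i.e., the model order of the dictionary sequence remains bounded. (In POLK with constant step-size η < 1/λ and budget ε = Kη^{3/2}, this applies with δ = K√η / C, so the model order of the limiting function is finite.) -/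
open scoped Classical

/-- **Bounded model order of the dictionary sequence.**
Let `δ > 0` and suppose `(D_t)` is a sequence of finite subsets of a compact metric
space `X` with `D_0 = ∅` such that at each step either `D_{t+1} ⊆ D_t`, or
`D_{t+1} ⊆ D_t ∪ {x_t}` for some `x_t ∈ X` whose feature image satisfies
`dist(φ(x_t), span{φ(d) : d ∈ D_t}) > δ`. Then there is a finite `M^∞` with
`|D_t| ≤ M^∞` for all `t`. (In POLK with constant step-size `η < 1/λ` and budget
`ε = Kη^{3/2}` this applies with `δ = K√η / C`.) -/
theorem polk_model_order_bounded
    {H : Type*} [NormedAddCommGroup H] [InnerProductSpace ℝ H]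
    {X : Type*} [MetricSpace X] [CompactSpace X]
    (φ : X → H) (hφc : Continuous φ)
    (δ : ℝ) (hδ : 0 < δ)
    (D : ℕ → Finset X) (hD0 : D 0 = ∅)
    (hstep : ∀ t, D (t + 1) ⊆ D t ∨
      ∃ x : X, D (t + 1) ⊆ insert x (D t) ∧
        δ < Metric.infDist (φ x) (Submodule.span ℝ (φ '' (D t : Set X)) : Set H)) :
    ∃ Minf : ℕ, ∀ t, (D t).card ≤ Minf := by
  -- Invariant: the images of points of `D t` are pairwise more than `δ` apart.
  have hsep : ∀ t, ∀ d ∈ D t, ∀ d' ∈ D t, d ≠ d' → δ < dist (φ d) (φ d') := by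
    intro t
    induction t with
    | zero => simp [hD0]
    | succ t ih =>
      rcases hstep t with hsub | ⟨x, hsub, hx⟩
      · intro d hd d' hd' hne
        exact ih d (hsub hd) d' (hsub hd') hne
      · intro d hd d' hd' hne
        have key : ∀ d' ∈ D t, δ < dist (φ x) (φ d') := by
          intro d' hd'
          have hmem : φ d' ∈ (Submodule.span ℝ (φ '' (D t : Set X)) : Set H) :=
            Submodule.subset_span ⟨d', by simpa using hd', rfl⟩
          exact lt_of_lt_of_le hx (Metric.infDist_le_dist_of_mem hmem)
        rcases Finset.mem_insert.mp (hsub hd) with rfl | hdt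
        · rcases Finset.mem_insert.mp (hsub hd') with rfl | hd't
          · exact absurd rfl hne
          · exact key d' hd't
        · rcases Finset.mem_insert.mp (hsub hd') with rfl | hd't
          · rw [dist_comm]; exact key d hdt
          · exact ih d hdt d' hd't hne
  -- the range of φ is compact, hence covered by finitely many balls of radius δ/2
  have hcomp : IsCompact (Set.range φ) := isCompact_range hφc
  obtain ⟨T, hTsub, hTfin, hTcov⟩ :=
    hcomp.finite_cover_balls (e := δ / 2) (by linarith)
  refine ⟨hTfin.toFinset.card, fun t => ?_⟩
  -- map each dictionary element to a ball center
  have hchoice : ∀ d ∈ D t, ∃ c ∈ T, φ d ∈ Metric.ball c (δ / 2) := by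
    intro d _
    have : φ d ∈ ⋃ c ∈ T, Metric.ball c (δ / 2) := hTcov ⟨d, rfl⟩
    simpa using this
  classical
  let f : X → H := fun d =>
    if h : ∃ c ∈ T, φ d ∈ Metric.ball c (δ / 2) then h.choose else φ d
  apply Finset.card_le_card_of_injOn f
  · intro d hd
    have h := hchoice d hd
    simp only [f, dif_pos h]
    simpa using h.choose_spec.1
  · intro d hd d' hd' hfe
    by_contra hne
    have h := hchoice d hd
    have h' := hchoice d' hd'
    have hb : φ d ∈ Metric.ball h.choose (δ / 2) := h.choose_spec.2
    have hb' : φ d' ∈ Metric.ball h'.choose (δ / 2) := h'.choose_spec.2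
    have hfd : f d = h.choose := dif_pos h
    have hfd' : f d' = h'.choose := dif_pos h'
    have hcc : h.choose = h'.choose := by rw [← hfd, ← hfd', hfe]
    have : dist (φ d) (φ d') < δ := by
      calc dist (φ d) (φ d') ≤ dist (φ d) h.choose + dist h.choose (φ d') := dist_triangle _ _ _
        _ < δ / 2 + δ / 2 := by
            apply add_lt_add
            · exact Metric.mem_ball.mp hb
            · rw [hcc, dist_comm]; exact Metric.mem_ball.mp hb'
        _ = δ := by ring
    exact absurd (hsep t d (by simpa using hd) d' (by simpa using hd') hne) (not_lt.mpr this.le)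
end

section
/- The POLK iterates are uniformly bounded in Hilbert norm: for all t ≥ 0, ‖f_t‖_H ≤ C X₀ / λ (almost surely). -/
open scoped RealInnerProductSpace NNReal

/-- **Uniform bound on the POLK iterates.**
The POLK iterates, with `f_0 = 0` and
`f_{t+1} = P_{V_{t+1}}[(1−η_tλ)f_t − η_t ℓ'(f_t(x_t),y_t)φ(x_t)]` for step-sizes
`η_t ∈ (0, 1/λ)`, satisfy `‖f_t‖ ≤ C X₀ / λ` for all `t ≥ 0`. -/
theorem polk_iterates_bounded
    {H : Type*} [NormedAddCommGroup H] [InnerProductSpace ℝ H] [CompleteSpace H]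
    {X : Type*} [MetricSpace X] [CompactSpace X] {Y : Type*}
    (φ : X → H) (hφc : Continuous φ) (X₀ : ℝ) (hφb : ∀ x, ‖φ x‖ ≤ X₀)
    (hX₀ : 0 ≤ X₀)
    (ℓ ℓ' : ℝ → Y → ℝ) (C : ℝ≥0)
    (hconv : ∀ y, ConvexOn ℝ Set.univ fun z => ℓ z y)
    (hlip : ∀ y, LipschitzWith C fun z => ℓ z y)
    (hderiv : ∀ z y, HasDerivAt (fun z' => ℓ z' y) (ℓ' z y) z)
    (lam : ℝ) (hlam : 0 < lam)
    (x : ℕ → X) (y : ℕ → Y)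
    (η : ℕ → ℝ) (hηpos : ∀ t, 0 < η t) (hηlam : ∀ t, η t < 1 / lam)
    (f : ℕ → H) (hf0 : f 0 = 0)
    -- `f (t+1)` is the orthogonal projection of the stochastic gradient step
    -- onto a closed linear subspace `V` of `H` (the orthogonal projection is
    -- norm-nonexpansive and fixes `0`):
    (hproj : ∀ t, ∃ V : Submodule ℝ H, IsClosed (V : Set H) ∧ f (t + 1) ∈ V ∧
      ∀ g ∈ V, ⟪((1 - η t * lam) • f t
        - (η t * ℓ' ⟪f t, φ (x t)⟫ (y t)) • φ (x t)) - f (t + 1), g⟫ = 0) :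
    ∀ t, ‖f t‖ ≤ (C : ℝ) * X₀ / lam := by
  -- derivative bound
  have hd : ∀ z yy, |ℓ' z yy| ≤ (C : ℝ) := by
    intro z yy
    have h := (hderiv z yy).hasFDerivAt.le_of_lipschitz (hlip yy)
    simpa using h
  intro t
  induction t with
  | zero => simp [hf0]; positivity
  | succ t ih =>
    obtain ⟨V, hVc, hmem, horth⟩ := hproj t
    set v : H := (1 - η t * lam) • f t
        - (η t * ℓ' ⟪f t, φ (x t)⟫ (y t)) • φ (x t) with hv
    have hle : ‖f (t + 1)‖ ≤ ‖v‖ := by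
      have hsq : ‖v‖ ^ 2 = ‖v - f (t + 1)‖ ^ 2 + ‖f (t + 1)‖ ^ 2 := by
        have hz := horth (f (t + 1)) hmem
        have hexp : v = (v - f (t + 1)) + f (t + 1) := by abel
        calc ‖v‖ ^ 2 = ‖(v - f (t + 1)) + f (t + 1)‖ ^ 2 := by rw [← hexp]
          _ = ‖v - f (t + 1)‖ ^ 2 + 2 * ⟪v - f (t + 1), f (t + 1)⟫ + ‖f (t + 1)‖ ^ 2 :=
            norm_add_sq_real _ _
          _ = ‖v - f (t + 1)‖ ^ 2 + ‖f (t + 1)‖ ^ 2 := by rw [hz]; ring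
      nlinarith [norm_nonneg (f (t + 1)), norm_nonneg v, sq_nonneg ‖v - f (t + 1)‖]
    have h1 : 0 ≤ 1 - η t * lam := by
      have := hηlam t
      have : η t * lam < 1 := by
        rw [lt_div_iff₀ hlam] at this; linarith
      linarith
    have hnv : ‖v‖ ≤ (1 - η t * lam) * ((C : ℝ) * X₀ / lam) + η t * ((C : ℝ) * X₀) := by
      calc ‖v‖ ≤ ‖(1 - η t * lam) • f t‖ + ‖(η t * ℓ' ⟪f t, φ (x t)⟫ (y t)) • φ (x t)‖ :=
            norm_sub_le _ _
        _ = (1 - η t * lam) * ‖f t‖ + |η t * ℓ' ⟪f t, φ (x t)⟫ (y t)| * ‖φ (x t)‖ := by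
            rw [norm_smul, norm_smul, Real.norm_eq_abs, Real.norm_eq_abs, abs_of_nonneg h1]
        _ ≤ (1 - η t * lam) * ((C : ℝ) * X₀ / lam) + η t * ((C : ℝ) * X₀) := by
            have h2 : |η t * ℓ' ⟪f t, φ (x t)⟫ (y t)| * ‖φ (x t)‖ ≤ η t * ((C : ℝ) * X₀) := by
              rw [abs_mul, abs_of_nonneg (hηpos t).le, mul_assoc]
              refine mul_le_mul_of_nonneg_left ?_ (hηpos t).le
              exact mul_le_mul (hd _ _) (hφb (x t)) (norm_nonneg _) C.coe_nonneg
            have h3 : (1 - η t * lam) * ‖f t‖ ≤ (1 - η t * lam) * ((C : ℝ) * X₀ / lam) :=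
              mul_le_mul_of_nonneg_left ih h1
            linarith
    have heq : (1 - η t * lam) * ((C : ℝ) * X₀ / lam) + η t * ((C : ℝ) * X₀)
        = (C : ℝ) * X₀ / lam := by
      field_simp
      ring
    linarith
end

section
/- Stochastic descent relation: for each t, the POLK iterates satisfy E[‖f_{t+1} − f*‖_H² | F_t] ≤ ‖f_t − f*‖_H² − 2η_t (R(f_t) − R(f*)) + 2ε_t ‖f_t − f*‖_H + η_t² σ² almost surely. -/
/-!
With `v = f_t - f*`, the update gives `‖f_{t+1} - f*‖² = ‖v‖² - 2η_t ⟪v, ∇̃_t⟫ + η_t² ‖∇̃_t‖²`.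
Since `ℓ` is Lipschitz and `φ` is bounded, the iterates are uniformly bounded, so every term is
integrable and the `F_t`-measurable `v` can be pulled out of the conditional expectation.
Then `E[∇̃_t | F_t]` lies within `ε_t / η_t` of `E[∇̂_t | F_t] = ∇R(f_t)`, and convexity gives
`⟪v, ∇R(f_t)⟫ ≥ R(f_t) - R(f*)`. If `∇̂_t` is not integrable, its conditional expectation is `0`
by convention; then `f_t` is a.s. a stationary point of `R`, hence equal to the unique minimizer.
-/

open MeasureTheory Filter Set
open scoped RealInnerProductSpace NNReal

section Convex

variable {H : Type*} [NormedAddCommGroup H] [InnerProductSpace ℝ H]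

theorem ConvexOn.inner_gradient_le_sub [CompleteSpace H] {R : H → ℝ} (hR : ConvexOn ℝ univ R)
    {G a : H} (hG : HasGradientAt R G a) (b : H) : ⟪G, b - a⟫ ≤ R b - R a := by
  let line : ℝ →ᵃ[ℝ] H := AffineMap.lineMap a b
  have hderiv : HasDerivAt (R ∘ line) ⟪G, b - a⟫ 0 := by
    have hG' : HasFDerivAt R (InnerProductSpace.toDual ℝ H G) (line 0) := by
      rwa [AffineMap.lineMap_apply_zero]
    simpa using hG'.comp_hasDerivAt (0 : ℝ) AffineMap.hasDerivAt_lineMap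
  simpa [slope, line] using
    (hR.comp_affineMap line).le_slope_of_hasDerivAt (mem_univ 0) (mem_univ 1)
      zero_lt_one hderiv

theorem ConvexOn.apply_lineMap_eq_of_forall_le {R : H → ℝ} (hR : ConvexOn ℝ univ R) {a b : H}
    (ha : ∀ f, R a ≤ R f) (hb : R b ≤ R a) {s : ℝ} (hs : s ∈ Icc (0 : ℝ) 1) :
    R (AffineMap.lineMap a b s) = R a := by
  refine le_antisymm ?_ (ha _)
  have := hR.2 (mem_univ a) (mem_univ b) (sub_nonneg.2 hs.2) hs.1 (sub_add_cancel 1 s)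
  rw [AffineMap.lineMap_apply_module]
  simp only [smul_eq_mul] at this
  nlinarith [hs.1]

theorem finite_setOf_norm_add_smul_sq_eq (a : H) {u : H} (hu : u ≠ 0) (d : ℝ) :
    {s : ℝ | ‖a + s • u‖ ^ 2 = d}.Finite := by
  open Polynomial in
  let p : ℝ[X] := C (‖u‖ ^ 2) * X ^ 2 + C (2 * ⟪a, u⟫) * X + C (‖a‖ ^ 2 - d)
  have hp : p ≠ 0 := by
    intro h
    have := congrArg (coeff · 2) h
    simp only [p, coeff_add, coeff_C_mul, coeff_X_pow, coeff_X, coeff_C] at this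
    norm_num at this
    exact hu this
  refine (finite_setOfPred_isRoot hp).subset fun s hs => ?_
  simp only [mem_ofPred_eq, IsRoot, p, eval_add, eval_mul, eval_C, eval_pow, eval_X] at hs ⊢
  rw [← hs, norm_add_sq_real, real_inner_smul_right, norm_smul, Real.norm_eq_abs, mul_pow, sq_abs]
  ring

theorem integral_convex_combination_le {α : Type*} [MeasurableSpace α] {μ : Measure α}
    {L : H → α → ℝ} (hL : ∀ p, ConvexOn ℝ univ fun f => L f p) {f g : H} {θ₁ θ₂ : ℝ}
    (hθ₁ : 0 ≤ θ₁) (hθ₂ : 0 ≤ θ₂) (hθ : θ₁ + θ₂ = 1) (hf : Integrable (L f) μ)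
    (hg : Integrable (L g) μ) (hfg : Integrable (L (θ₁ • f + θ₂ • g)) μ) :
    ∫ p, L (θ₁ • f + θ₂ • g) p ∂μ ≤ θ₁ * ∫ p, L f p ∂μ + θ₂ * ∫ p, L g p ∂μ := by
  rw [← integral_const_mul, ← integral_const_mul, ← integral_add (hf.const_mul _) (hg.const_mul _)]
  exact integral_mono hfg ((hf.const_mul _).add (hg.const_mul _))
    fun p => (hL p).2 (mem_univ f) (mem_univ g) hθ₁ hθ₂ hθ

/-- Along the segment from `a` to `b` the integral term equals a strictly concave quadratic, yet
it is midpoint convex at any three points where the integrand is integrable. Since a non-integrable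
integrand has integral `0`, integrability can only fail at the (at most two) zeros of that
quadratic. -/
theorem eq_of_minimizer_of_eq_integral_add_sq_norm {α : Type*} [MeasurableSpace α] {μ : Measure α}
    {L : H → α → ℝ} (hL : ∀ p, ConvexOn ℝ univ fun f => L f p) {lam : ℝ} (hlam : 0 < lam)
    {R : H → ℝ} (hR : ∀ f, R f = (∫ p, L f p ∂μ) + lam / 2 * ‖f‖ ^ 2)
    (hRconv : ConvexOn ℝ univ R) {a b : H} (ha : ∀ f, R a ≤ R f) (hb : R b ≤ R a) : b = a := by
  by_contra hne
  set u := b - a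
  have hu : u ≠ 0 := sub_ne_zero.2 hne
  have hsq : ∀ s : ℝ, ‖a + s • u‖ ^ 2 = ‖a‖ ^ 2 + 2 * s * ⟪a, u⟫ + s ^ 2 * ‖u‖ ^ 2 := fun s => by
    rw [norm_add_sq_real, real_inner_smul_right, norm_smul, Real.norm_eq_abs, mul_pow, sq_abs]
    ring
  have hsegment : ∀ s ∈ Icc (0 : ℝ) 1,
      ∫ p, L (a + s • u) p ∂μ = R a - lam / 2 * ‖a + s • u‖ ^ 2 := fun s hs => by
    have := hRconv.apply_lineMap_eq_of_forall_le ha hb hs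
    rw [AffineMap.lineMap_apply_module', add_comm, hR] at this
    linarith
  set S := {s : ℝ | ‖a + s • u‖ ^ 2 = R a / (lam / 2)}
  have hS : S.Finite := finite_setOf_norm_add_smul_sq_eq a hu _
  have hgood : ∀ s ∈ Icc (0 : ℝ) 1, s ∉ S → Integrable (L (a + s • u)) μ := by
    intro s hs hsS
    by_contra hnint
    have := hsegment s hs
    rw [integral_undef hnint] at this
    exact hsS (by simp only [S, mem_ofPred_eq]; field_simp; linarith)
  obtain ⟨x, ⟨hx0, hx3⟩, hxS⟩ := ((Ioc_infinite (by norm_num : (0 : ℝ) < 1 / 3)).sdiff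
    ((hS.union (hS.preimage (mul_right_injective₀ two_ne_zero).injOn)).union
      (hS.preimage (mul_right_injective₀ three_ne_zero).injOn))).nonempty
  simp only [mem_union, mem_preimage, not_or] at hxS
  obtain ⟨⟨h1, h2⟩, h3⟩ := hxS
  have hmid : (1 / 2 : ℝ) • (a + x • u) + (1 / 2 : ℝ) • (a + (3 * x) • u) = a + (2 * x) • u := by
    module
  have hconv := integral_convex_combination_le hL (by norm_num) (by norm_num) (by norm_num)
    (hgood x ⟨hx0.le, by linarith⟩ h1) (hgood (3 * x) ⟨by linarith, by linarith⟩ h3)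
    (hmid ▸ hgood (2 * x) ⟨by linarith, by linarith⟩ h2)
  rw [hmid, hsegment x ⟨hx0.le, by linarith⟩, hsegment (2 * x) ⟨by linarith, by linarith⟩,
    hsegment (3 * x) ⟨by linarith, by linarith⟩, hsq, hsq, hsq] at hconv
  nlinarith [mul_pos (half_pos hlam) (mul_pos (pow_pos hx0 2) (pow_pos (norm_pos_iff.2 hu) 2))]

end Convex

section Stochastic

variable {Ω H : Type*} [NormedAddCommGroup H] [InnerProductSpace ℝ H]

theorem norm_smul_add_smul_le {c C X₀ lam : ℝ} {w f : H} (hc : |c| ≤ C) (hw : ‖w‖ ≤ X₀)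
    (hlam : 0 ≤ lam) : ‖c • w + lam • f‖ ≤ C * X₀ + lam * ‖f‖ := by
  refine (norm_add_le _ _).trans ?_
  rw [norm_smul, norm_smul, Real.norm_eq_abs, Real.norm_of_nonneg hlam]
  gcongr
  exact (abs_nonneg c).trans hc

theorem exists_norm_le_of_eq_sub_smul {f g : ℕ → Ω → H} {η a b : ℕ → ℝ}
    (hη : ∀ t, 0 ≤ η t) (hb : ∀ t, 0 ≤ b t) (h0 : ∃ B, ∀ ω, ‖f 0 ω‖ ≤ B)
    (hf : ∀ t ω, f (t + 1) ω = f t ω - η t • g t ω) (hg : ∀ t ω, ‖g t ω‖ ≤ a t + b t * ‖f t ω‖) :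
    ∀ t, ∃ B, ∀ ω, ‖f t ω‖ ≤ B
  | 0 => h0
  | t + 1 => by
    obtain ⟨B, hB⟩ := exists_norm_le_of_eq_sub_smul hη hb h0 hf hg t
    refine ⟨B + η t * (a t + b t * B), fun ω => ?_⟩
    calc ‖f (t + 1) ω‖ ≤ ‖f t ω‖ + ‖η t • g t ω‖ := hf t ω ▸ norm_sub_le _ _
      _ = ‖f t ω‖ + η t * ‖g t ω‖ := by rw [norm_smul, Real.norm_of_nonneg (hη t)]
      _ ≤ B + η t * (a t + b t * B) := add_le_add (hB ω) <| mul_le_mul_of_nonneg_left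
          ((hg t ω).trans (add_le_add_right (mul_le_mul_of_nonneg_left (hB ω) (hb t)) _)) (hη t)

variable [CompleteSpace H] {m m0 : MeasurableSpace Ω} {μ : Measure Ω}

theorem condExp_norm_sub_smul_sq [IsFiniteMeasure μ] (hm : m ≤ m0) {v g : Ω → H}
    (hv : StronglyMeasurable[m] v) {c : ℝ} (hvc : ∀ ω, ‖v ω‖ ≤ c) (hg : MemLp g 2 μ)
    (η : ℝ) :
    μ[fun ω => ‖v ω - η • g ω‖ ^ 2 | m] =ᵐ[μ]
      fun ω => ‖v ω‖ ^ 2 - 2 * η * ⟪v ω, μ[g | m] ω⟫ + η ^ 2 * μ[fun ω => ‖g ω‖ ^ 2 | m] ω := by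
  have hg1 : Integrable g μ := hg.integrable one_le_two
  have hg2 : Integrable (fun ω => ‖g ω‖ ^ 2) μ := hg.integrable_norm_pow two_ne_zero
  have hv2 : Integrable (fun ω => ‖v ω‖ ^ 2) μ :=
    Integrable.of_bound ((hv.mono hm).aestronglyMeasurable.norm.pow 2) (c ^ 2) <|
      ae_of_all _ fun ω => by
        rw [Real.norm_eq_abs, abs_pow, abs_norm]
        exact pow_le_pow_left₀ (norm_nonneg _) (hvc ω) 2
  have hvg : Integrable (fun ω => ⟪v ω, g ω⟫) μ :=
    (innerSL ℝ : H →L[ℝ] H →L[ℝ] ℝ).integrable_of_bilin_of_bdd_left c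
      (hv.mono hm).aestronglyMeasurable (ae_of_all _ hvc) hg1
  have hexpand : (fun ω => ‖v ω - η • g ω‖ ^ 2)
      = (fun ω => ‖v ω‖ ^ 2) + ((-(2 * η)) • fun ω => ⟪v ω, g ω⟫) + η ^ 2 • fun ω => ‖g ω‖ ^ 2 := by
    funext ω
    simp only [Pi.add_apply, Pi.smul_apply, smul_eq_mul]
    rw [norm_sub_sq_real, real_inner_smul_right, norm_smul, Real.norm_eq_abs, mul_pow, sq_abs]
    ring
  have hpull : μ[fun ω => ⟪v ω, g ω⟫ | m] =ᵐ[μ] fun ω => ⟪v ω, μ[g | m] ω⟫ :=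
    condExp_bilin_of_stronglyMeasurable_left (innerSL ℝ : H →L[ℝ] H →L[ℝ] ℝ) hv hvg hg1
  have hv2m : μ[fun ω => ‖v ω‖ ^ 2 | m] = fun ω => ‖v ω‖ ^ 2 :=
    condExp_of_stronglyMeasurable hm ((continuous_pow 2).comp_stronglyMeasurable hv.norm) hv2
  rw [hexpand]
  filter_upwards [condExp_add (hv2.add (hvg.smul (-(2 * η)))) (hg2.smul (η ^ 2)) m,
    condExp_add hv2 (hvg.smul (-(2 * η))) m, condExp_smul (-(2 * η)) (fun ω => ⟪v ω, g ω⟫) m,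
    condExp_smul (η ^ 2) (fun ω => ‖g ω‖ ^ 2) m, hpull] with ω h₁ h₂ h₃ h₄ h₅
  simp only [h₁, Pi.add_apply, h₂, h₃, h₄, Pi.smul_apply, smul_eq_mul, h₅, hv2m]
  ring

theorem le_inner_condExp_of_biased_gradient {R : H → ℝ} (hR : ConvexOn ℝ univ R) {gradR : H → H}
    (hgrad : ∀ x, HasGradientAt R (gradR x) x) {xstar : H}
    (hunique : ∀ x, gradR x = 0 → x = xstar) {x g ĝ : Ω → H} {δ : ℝ} (hg : Integrable g μ)
    (hbias : ∀ ω, ‖g ω - ĝ ω‖ ≤ δ) (hunbiased : μ[ĝ | m] =ᵐ[μ] fun ω => gradR (x ω)) :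
    ∀ᵐ ω ∂μ, R (x ω) - R xstar - δ * ‖x ω - xstar‖ ≤ ⟪x ω - xstar, μ[g | m] ω⟫ := by
  have hmono : ∀ ω, R (x ω) - R xstar ≤ ⟪x ω - xstar, gradR (x ω)⟫ := fun ω => by
    have := hR.inner_gradient_le_sub (hgrad (x ω)) xstar
    rw [← neg_sub, inner_neg_right, real_inner_comm] at this
    linarith
  by_cases hĝ : Integrable ĝ μ
  · filter_upwards [condExp_add hĝ (hg.sub hĝ) m, hunbiased,
      ae_bdd_norm_condExp_of_ae_bdd_norm (m := m)
        (ae_of_all μ hbias : ∀ᵐ ω ∂μ, ‖(g - ĝ) ω‖ ≤ δ)] with ω h₁ h₂ h₃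
    rw [add_sub_cancel] at h₁
    rw [h₁, Pi.add_apply, h₂, inner_add_right]
    have := (abs_le.1 ((abs_real_inner_le_norm _ _).trans
      (mul_le_mul_of_nonneg_left h₃ (norm_nonneg (x ω - xstar))))).1
    linarith [hmono ω]
  · -- the junk value `μ[ĝ | m] = 0` forces a stationary, hence optimal, point
    filter_upwards [hunbiased] with ω h
    rw [condExp_of_not_integrable hĝ, Pi.zero_apply] at h
    simp [hunique _ h.symm]

theorem condExp_norm_sub_sq_le_of_biased_step [IsFiniteMeasure μ] (hm : m ≤ m0) {R : H → ℝ}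
    (hR : ConvexOn ℝ univ R) {gradR : H → H} (hgrad : ∀ x, HasGradientAt R (gradR x) x)
    {xstar : H} (hunique : ∀ x, gradR x = 0 → x = xstar) {x g ĝ : Ω → H}
    (hx : StronglyMeasurable[m] x) {c : ℝ} (hxc : ∀ ω, ‖x ω‖ ≤ c) (hg : MemLp g 2 μ) {δ : ℝ}
    (hbias : ∀ ω, ‖g ω - ĝ ω‖ ≤ δ) (hunbiased : μ[ĝ | m] =ᵐ[μ] fun ω => gradR (x ω)) {σ : ℝ}
    (hvar : ∀ᵐ ω ∂μ, μ[fun ω => ‖g ω‖ ^ 2 | m] ω ≤ σ ^ 2) {η : ℝ} (hη : 0 ≤ η) :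
    ∀ᵐ ω ∂μ, μ[fun ω => ‖x ω - η • g ω - xstar‖ ^ 2 | m] ω
      ≤ ‖x ω - xstar‖ ^ 2 - 2 * η * (R (x ω) - R xstar) + 2 * (η * δ) * ‖x ω - xstar‖
        + η ^ 2 * σ ^ 2 := by
  have hexpand := condExp_norm_sub_smul_sq (v := fun ω => x ω - xstar) hm
    (hx.sub stronglyMeasurable_const)
    (fun ω => (norm_sub_le _ _).trans (add_le_add_left (hxc ω) ‖xstar‖)) hg η
  have hinner := le_inner_condExp_of_biased_gradient hR hgrad hunique
    (hg.integrable one_le_two) hbias hunbiased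
  simp only [sub_right_comm _ (η • _)]
  filter_upwards [hexpand, hinner, hvar] with ω h₁ h₂ h₃
  rw [h₁]
  nlinarith [mul_le_mul_of_nonneg_left h₂ hη, mul_le_mul_of_nonneg_left h₃ (sq_nonneg η)]

end Stochastic

theorem polk_stochastic_descent_general
    {H : Type*} [NormedAddCommGroup H] [InnerProductSpace ℝ H] [CompleteSpace H]
    {X : Type*} [MeasurableSpace X]
    {Y : Type*} [MeasurableSpace Y]
    (φ : X → H) (X₀ : ℝ) (hφb : ∀ x, ‖φ x‖ ≤ X₀)
    (ℓ ℓ' : ℝ → Y → ℝ) (C : ℝ≥0)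
    (hconv : ∀ y, ConvexOn ℝ Set.univ fun z => ℓ z y)
    (hlip : ∀ y, LipschitzWith C fun z => ℓ z y)
    (hderiv : ∀ z y, HasDerivAt (fun z' => ℓ z' y) (ℓ' z y) z)
    (μ : Measure (X × Y))
    (lam : ℝ) (hlam : 0 < lam)
    (R : H → ℝ)
    (hR : ∀ f, R f = (∫ p, ℓ ⟪f, φ p.1⟫ p.2 ∂μ) + lam / 2 * ‖f‖ ^ 2)
    (hRconv : ConvexOn ℝ Set.univ R)
    (gradR : H → H) (hgrad : ∀ f, HasGradientAt R (gradR f) f)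
    (fstar : H) (hfstar : ∀ f, R fstar ≤ R f)
    {Ω : Type*} {m0 : MeasurableSpace Ω} (P : Measure Ω) [IsProbabilityMeasure P]
    (ℱ : Filtration ℕ m0)
    (ξ : ℕ → Ω → X × Y)
    (η : ℕ → ℝ) (hηpos : ∀ t, 0 < η t)
    (ε : ℕ → ℝ)
    (f : ℕ → Ω → H) (hf0 : ∀ ω, f 0 ω = 0)
    (hadapted : StronglyAdapted ℱ f)
    -- the projected stochastic gradient `∇̃_t`:
    (gtil : ℕ → Ω → H)
    (hupdate : ∀ t ω, f (t + 1) ω = f t ω - η t • gtil t ω)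
    -- bias bound `‖∇̃_t − ∇̂_t‖ ≤ ε_t/η_t`, with
    -- `∇̂_t = ℓ'(f_t(x_t),y_t) φ(x_t) + λ f_t`:
    (hbias : ∀ t ω,
      ‖gtil t ω - (ℓ' ⟪f t ω, φ (ξ t ω).1⟫ (ξ t ω).2 • φ (ξ t ω).1 + lam • f t ω)‖
        ≤ ε t / η t)
    (σ : ℝ)
    -- unbiasedness of the regularized stochastic gradient:
    (hunbiased : ∀ t,
      P[(fun ω => ℓ' ⟪f t ω, φ (ξ t ω).1⟫ (ξ t ω).2 • φ (ξ t ω).1 + lam • f t ω) | ℱ t]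
        =ᵐ[P] fun ω => gradR (f t ω))
    -- finite conditional second moment of the projected stochastic gradient:
    (hvar : ∀ t, ∀ᵐ ω ∂P, (P[(fun ω' => ‖gtil t ω'‖ ^ 2) | ℱ t]) ω ≤ σ ^ 2) :
    ∀ t, ∀ᵐ ω ∂P,
      (P[(fun ω' => ‖f (t + 1) ω' - fstar‖ ^ 2) | ℱ t]) ω
        ≤ ‖f t ω - fstar‖ ^ 2 - 2 * η t * (R (f t ω) - R fstar)
          + 2 * ε t * ‖f t ω - fstar‖ + η t ^ 2 * σ ^ 2 := by
  intro t
  have hgtil_le : ∀ s ω, ‖gtil s ω‖ ≤ (C * X₀ + ε s / η s) + lam * ‖f s ω‖ := fun s ω => by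
    have hℓ' : |ℓ' ⟪f s ω, φ (ξ s ω).1⟫ (ξ s ω).2| ≤ C := by
      simpa using (hderiv _ _).le_of_lipschitz (hlip _)
    refine (norm_le_norm_add_norm_sub' _ _).trans ((add_le_add
      (norm_smul_add_smul_le hℓ' (hφb (ξ s ω).1) hlam.le) (hbias s ω)).trans_eq (by ring))
  obtain ⟨B, hB⟩ := exists_norm_le_of_eq_sub_smul (fun s => (hηpos s).le) (fun _ => hlam.le)
    ⟨0, by simp [hf0]⟩ hupdate hgtil_le t
  have hgtil_eq : gtil t = (η t)⁻¹ • (f t - f (t + 1)) := by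
    funext ω
    simp [hupdate, smul_smul, (hηpos t).ne']
  have hgtil_mem : MemLp (gtil t) ⊤ P :=
    memLp_top_of_bound (hgtil_eq ▸ ((((hadapted t).mono (ℱ.le t)).sub
      ((hadapted (t + 1)).mono (ℱ.le _))).const_smul _).aestronglyMeasurable)
      ((C * X₀ + ε t / η t) + lam * B) (ae_of_all _ fun ω => (hgtil_le t ω).trans
        (add_le_add_right (mul_le_mul_of_nonneg_left (hB ω) hlam.le) _))
  have hunique : ∀ x, gradR x = 0 → x = fstar := fun x hx =>
    eq_of_minimizer_of_eq_integral_add_sq_norm (L := fun f (p : X × Y) => ℓ ⟪f, φ p.1⟫ p.2)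
      (fun p => by simpa [Function.comp_def, real_inner_comm] using
        (hconv p.2).comp_linearMap (innerₗ H (φ p.1)))
      hlam hR hRconv hfstar (by simpa [hx] using hRconv.inner_gradient_le_sub (hgrad x) fstar)
  filter_upwards [condExp_norm_sub_sq_le_of_biased_step (ℱ.le t) hRconv hgrad hunique (hadapted t)
    hB (hgtil_mem.mono_exponent le_top) (hbias t) (hunbiased t) (hvar t) (hηpos t).le] with ω h
  simp only [hupdate]
  refine h.trans_eq ?_
  rw [mul_div_cancel₀ _ (hηpos t).ne']

/-- **Stochastic descent relation for POLK.**
For each `t`, the POLK iterates satisfy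
`E[‖f_{t+1} − f*‖² | F_t] ≤ ‖f_t − f*‖² − 2η_t (R(f_t) − R(f*)) + 2ε_t ‖f_t − f*‖ + η_t² σ²`
almost surely. -/
theorem polk_stochastic_descent
    {H : Type*} [NormedAddCommGroup H] [InnerProductSpace ℝ H] [CompleteSpace H]
    {X : Type*} [MetricSpace X] [CompactSpace X] [MeasurableSpace X]
    {Y : Type*} [MeasurableSpace Y]
    (φ : X → H) (hφc : Continuous φ) (X₀ : ℝ) (hφb : ∀ x, ‖φ x‖ ≤ X₀)
    (ℓ ℓ' : ℝ → Y → ℝ) (C : ℝ≥0)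
    (hconv : ∀ y, ConvexOn ℝ Set.univ fun z => ℓ z y)
    (hlip : ∀ y, LipschitzWith C fun z => ℓ z y)
    (hderiv : ∀ z y, HasDerivAt (fun z' => ℓ z' y) (ℓ' z y) z)
    (μ : Measure (X × Y)) [IsProbabilityMeasure μ]
    (lam : ℝ) (hlam : 0 < lam)
    (R : H → ℝ)
    (hR : ∀ f, R f = (∫ p, ℓ ⟪f, φ p.1⟫ p.2 ∂μ) + lam / 2 * ‖f‖ ^ 2)
    (hRconv : ConvexOn ℝ Set.univ R)
    (gradR : H → H) (hgrad : ∀ f, HasGradientAt R (gradR f) f)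
    (fstar : H) (hfstar : ∀ f, R fstar ≤ R f)
    {Ω : Type*} {m0 : MeasurableSpace Ω} (P : Measure Ω) [IsProbabilityMeasure P]
    (ℱ : Filtration ℕ m0)
    (ξ : ℕ → Ω → X × Y)
    (hlaw : ∀ t, Measure.map (ξ t) P = μ)
    (hiid : ProbabilityTheory.iIndepFun ξ P)
    (hindep : ∀ t,
      ProbabilityTheory.Indep (MeasurableSpace.comap (ξ t) inferInstance) (ℱ t) P)
    (hmeas : ∀ t, Measurable[ℱ (t + 1)] (ξ t))
    (η : ℕ → ℝ) (hηpos : ∀ t, 0 < η t) (hηlam : ∀ t, η t < 1 / lam)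
    (ε : ℕ → ℝ) (hε : ∀ t, 0 ≤ ε t)
    (f : ℕ → Ω → H) (hf0 : ∀ ω, f 0 ω = 0)
    (hadapted : StronglyAdapted ℱ f)
    -- the projected stochastic gradient `∇̃_t`:
    (gtil : ℕ → Ω → H)
    (hupdate : ∀ t ω, f (t + 1) ω = f t ω - η t • gtil t ω)
    -- bias bound `‖∇̃_t − ∇̂_t‖ ≤ ε_t/η_t`, with
    -- `∇̂_t = ℓ'(f_t(x_t),y_t) φ(x_t) + λ f_t`:
    (hbias : ∀ t ω,
      ‖gtil t ω - (ℓ' ⟪f t ω, φ (ξ t ω).1⟫ (ξ t ω).2 • φ (ξ t ω).1 + lam • f t ω)‖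
        ≤ ε t / η t)
    (σ : ℝ)
    -- unbiasedness of the regularized stochastic gradient:
    (hunbiased : ∀ t,
      P[(fun ω => ℓ' ⟪f t ω, φ (ξ t ω).1⟫ (ξ t ω).2 • φ (ξ t ω).1 + lam • f t ω) | ℱ t]
        =ᵐ[P] fun ω => gradR (f t ω))
    -- finite conditional second moment of the projected stochastic gradient:
    (hvar : ∀ t, ∀ᵐ ω ∂P, (P[(fun ω' => ‖gtil t ω'‖ ^ 2) | ℱ t]) ω ≤ σ ^ 2) :
    ∀ t, ∀ᵐ ω ∂P,
      (P[(fun ω' => ‖f (t + 1) ω' - fstar‖ ^ 2) | ℱ t]) ω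
        ≤ ‖f t ω - fstar‖ ^ 2 - 2 * η t * (R (f t ω) - R fstar)
          + 2 * ε t * ‖f t ω - fstar‖ + η t ^ 2 * σ ^ 2 :=
  polk_stochastic_descent_general φ X₀ hφb ℓ ℓ' C hconv hlip hderiv μ lam hlam R hR hRconv gradR
    hgrad fstar hfstar P ℱ ξ η hηpos ε f hf0 hadapted gtil hupdate hbias σ hunbiased hvar
end

section
/- Supermartingale (Robbins–Siegmund type) lemma for the diminishing step-size analysis: on a filtered probability space let (a_t) and (b_t) be nonnegative adapted real-valued processes and c ≥ 0 a constant, with step-sizes η_t ≥ 0 satisfying Σ_t η_t² < ∞. If E[a_{t+1} | F_t] ≤ a_t − b_t + c η_t² almost surely for every t, then a_t converges almost surely to a finite limit and Σ_t b_t < ∞ almost surely; if in addition b_t = 2η_t r_t with r_t ≥ 0 and Σ_t η_t = ∞, then liminf_{t→∞} r_t = 0 almost surely. -/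
/-!
The descent inequality says exactly that `X_t = a_t + ∑_{s<t} (b_s - d_s)`, with `d_t = c η_t²`,
is a supermartingale. Since `a, b ≥ 0` and `d` is summable, `X` is bounded below by `-∑ |d_s|`,
hence bounded in `L¹`, so it converges almost surely. Along a convergent path the partial sums
of `b` are bounded, so `∑ b_t < ∞` and then `a_t` converges as well.
If `r_t ≥ ε > 0` eventually, then `|η_t| ≤ |η_t r_t| / ε` and `∑ η_t` would converge; hence
`r_t < ε` infinitely often for every `ε > 0`, i.e. `liminf r_t = 0`.
-/

open MeasureTheory Filter Finset Topology

theorem exists_tendsto_and_summable_of_tendsto_add_sum_sub {x y d : ℕ → ℝ}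
    (hx : ∀ t, 0 ≤ x t) (hy : ∀ t, 0 ≤ y t) (hd : Summable d) {l : ℝ}
    (h : Tendsto (fun t => x t + ∑ s ∈ range t, (y s - d s)) atTop (𝓝 l)) :
    (∃ l', Tendsto x atTop (𝓝 l')) ∧ Summable y := by
  have hxy : Tendsto (fun t => x t + ∑ s ∈ range t, y s) atTop (𝓝 (l + ∑' s, d s)) := by
    convert h.add hd.hasSum.tendsto_sum_nat using 1
    funext t
    rw [sum_sub_distrib]
    ring
  obtain ⟨C, hC⟩ := hxy.bddAbove_range
  have hy_sum : Summable y :=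
    summable_of_sum_range_le hy fun t => by linarith [hx t, hC (Set.mem_range_self t)]
  exact ⟨⟨_, by simpa using hxy.sub hy_sum.hasSum.tendsto_sum_nat⟩, hy_sum⟩

theorem frequently_lt_of_summable_mul_of_not_summable {r η : ℕ → ℝ}
    (hηr : Summable fun t => η t * r t) (hη : ¬Summable η) {ε : ℝ} (hε : 0 < ε) :
    ∃ᶠ t in atTop, r t < ε := by
  refine fun hge => hη (.of_norm_bounded_eventually_nat (hηr.abs.mul_left ε⁻¹) ?_)
  filter_upwards [hge] with t ht
  rw [Real.norm_eq_abs, le_inv_mul_iff₀ hε, abs_mul, mul_comm]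
  exact mul_le_mul_of_nonneg_left ((not_lt.1 ht).trans (le_abs_self _)) (abs_nonneg _)

theorem liminf_eq_zero_of_frequently_lt {r : ℕ → ℝ} (hr : ∀ t, 0 ≤ r t)
    (h : ∀ ε > 0, ∃ᶠ t in atTop, r t < ε) : liminf r atTop = 0 := by
  have hbdd : IsBoundedUnder (· ≥ ·) atTop r := isBoundedUnder_of ⟨0, hr⟩
  have hcobdd : IsCoboundedUnder (· ≥ ·) atTop r :=
    .of_frequently_le ((h 1 one_pos).mono fun _ => le_of_lt)
  refine le_antisymm (le_of_forall_pos_le_add fun ε hε => ?_)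
    (le_liminf_of_le hcobdd (.of_forall hr))
  simpa using liminf_le_of_frequently_le ((h ε hε).mono fun _ => le_of_lt) hbdd

theorem liminf_eq_zero_of_summable_mul_of_not_summable {r η : ℕ → ℝ} (hr : ∀ t, 0 ≤ r t)
    (hηr : Summable fun t => η t * r t) (hη : ¬Summable η) : liminf r atTop = 0 :=
  liminf_eq_zero_of_frequently_lt hr fun _ hε =>
    frequently_lt_of_summable_mul_of_not_summable hηr hη hε

namespace MeasureTheory

variable {Ω : Type*} {m0 : MeasurableSpace Ω} {P : Measure Ω} [IsFiniteMeasure P]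
  {ℱ : Filtration ℕ m0}

theorem Supermartingale.eLpNorm_one_le_of_ae_le {f : ℕ → Ω → ℝ} (hf : Supermartingale f ℱ P)
    {C : ℝ} (hC : ∀ n, ∀ᵐ ω ∂P, C ≤ f n ω) (n : ℕ) :
    eLpNorm (f n) 1 P ≤ ENNReal.ofReal (∫ ω, f 0 ω ∂P + 2 * |C| * P.real Set.univ) := by
  have habs : ∀ᵐ ω ∂P, |f n ω| ≤ f n ω + 2 * |C| := by
    filter_upwards [hC n] with ω hω
    rcases abs_cases (f n ω) with ⟨h, _⟩ | ⟨h, _⟩ <;> linarith [neg_abs_le C, abs_nonneg C]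
  have hmean : ∫ ω, f n ω ∂P ≤ ∫ ω, f 0 ω ∂P := by
    simpa using hf.setIntegral_le (Nat.zero_le n) MeasurableSet.univ
  rw [eLpNorm_one_eq_lintegral_enorm, ← ofReal_integral_norm_eq_lintegral_enorm (hf.integrable n)]
  refine ENNReal.ofReal_le_ofReal ?_
  calc ∫ ω, ‖f n ω‖ ∂P ≤ ∫ ω, (f n ω + 2 * |C|) ∂P :=
        integral_mono_ae (hf.integrable n).norm ((hf.integrable n).add (integrable_const _)) habs
    _ = ∫ ω, f n ω ∂P + 2 * |C| * P.real Set.univ := by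
        rw [integral_add (hf.integrable n) (integrable_const _), integral_const, smul_eq_mul,
          mul_comm]
    _ ≤ _ := by linarith

theorem Supermartingale.exists_ae_tendsto_of_ae_le {f : ℕ → Ω → ℝ} (hf : Supermartingale f ℱ P)
    {C : ℝ} (hC : ∀ n, ∀ᵐ ω ∂P, C ≤ f n ω) :
    ∀ᵐ ω ∂P, ∃ l, Tendsto (fun n => f n ω) atTop (𝓝 l) := by
  have hbdd (n : ℕ) : eLpNorm ((-f) n) 1 P ≤
      (∫ ω, f 0 ω ∂P + 2 * |C| * P.real Set.univ).toNNReal := by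
    rw [Pi.neg_apply, eLpNorm_neg]
    exact hf.eLpNorm_one_le_of_ae_le hC n
  filter_upwards [hf.neg.exists_ae_tendsto_of_bdd hbdd] with ω ⟨l, hl⟩
  exact ⟨-l, by simpa using hl.neg⟩

end MeasureTheory

section RobbinsSiegmund

variable {Ω : Type*} {m0 : MeasurableSpace Ω} {P : Measure Ω} [IsFiniteMeasure P]
  {ℱ : Filtration ℕ m0} {a b : ℕ → Ω → ℝ} {d : ℕ → ℝ}

def robbinsSiegmundProcess (a b : ℕ → Ω → ℝ) (d : ℕ → ℝ) (t : ℕ) (ω : Ω) : ℝ :=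
  a t ω + ∑ s ∈ range t, (b s ω - d s)

theorem robbinsSiegmundProcess_succ (t : ℕ) (ω : Ω) :
    robbinsSiegmundProcess a b d (t + 1) ω =
      a (t + 1) ω + (robbinsSiegmundProcess a b d t ω - a t ω + b t ω - d t) := by
  simp only [robbinsSiegmundProcess, sum_range_succ]
  ring

theorem adapted_robbinsSiegmundProcess (ha : Adapted ℱ a) (hb : Adapted ℱ b) :
    Adapted ℱ (robbinsSiegmundProcess a b d) := fun t =>
  (ha t).add <| Finset.measurable_sum _ fun s hs =>
    ((hb s).mono (ℱ.mono (mem_range.1 hs).le) le_rfl).sub measurable_const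

theorem integrable_robbinsSiegmundProcess (ha : ∀ t, Integrable (a t) P)
    (hb : ∀ t, Integrable (b t) P) (t : ℕ) : Integrable (robbinsSiegmundProcess a b d t) P :=
  (ha t).add <| integrable_finsetSum _ fun s _ => (hb s).sub (integrable_const _)

theorem supermartingale_robbinsSiegmundProcess (ha_adapted : Adapted ℱ a) (hb_adapted : Adapted ℱ b)
    (ha_int : ∀ t, Integrable (a t) P) (hb_int : ∀ t, Integrable (b t) P)
    (hdescent : ∀ t, ∀ᵐ ω ∂P, (P[a (t + 1) | ℱ t]) ω ≤ a t ω - b t ω + d t) :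
    Supermartingale (robbinsSiegmundProcess a b d) ℱ P := by
  set X := robbinsSiegmundProcess a b d
  have hX_adapted := adapted_robbinsSiegmundProcess (d := d) ha_adapted hb_adapted
  have hX_int := integrable_robbinsSiegmundProcess (d := d) ha_int hb_int
  refine supermartingale_nat hX_adapted.stronglyAdapted hX_int fun t => ?_
  set g : Ω → ℝ := fun ω => X t ω - a t ω + b t ω - d t
  have hg_meas : StronglyMeasurable[ℱ t] g :=
    (((hX_adapted t).sub (ha_adapted t)).add (hb_adapted t)).sub measurable_const
      |>.stronglyMeasurable
  have hg_int : Integrable g P :=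
    (((hX_int t).sub (ha_int t)).add (hb_int t)).sub (integrable_const _)
  have hX_succ : X (t + 1) = a (t + 1) + g := funext (robbinsSiegmundProcess_succ t)
  have hcond : P[X (t + 1) | ℱ t] =ᵐ[P] P[a (t + 1) | ℱ t] + g := by
    rw [hX_succ]
    exact (condExp_add (ha_int (t + 1)) hg_int _).trans
      (by rw [condExp_of_stronglyMeasurable (ℱ.le t) hg_meas hg_int])
  filter_upwards [hcond, hdescent t] with ω hω hdescent_ω
  rw [hω, Pi.add_apply]
  linarith

theorem neg_tsum_abs_le_robbinsSiegmundProcess (ha : ∀ t ω, 0 ≤ a t ω) (hb : ∀ t ω, 0 ≤ b t ω)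
    (hd : Summable d) (t : ℕ) (ω : Ω) : -∑' s, |d s| ≤ robbinsSiegmundProcess a b d t ω := by
  have hd_partial : ∑ s ∈ range t, d s ≤ ∑' s, |d s| :=
    (sum_le_sum fun s _ => le_abs_self _).trans
      (hd.abs.sum_le_tsum _ fun _ _ => abs_nonneg _)
  rw [robbinsSiegmundProcess, sum_sub_distrib]
  linarith [ha t ω, sum_nonneg fun s (_ : s ∈ range t) => hb s ω]

theorem robbins_siegmund (ha_nonneg : ∀ t ω, 0 ≤ a t ω)
    (hb_nonneg : ∀ t ω, 0 ≤ b t ω) (ha_adapted : Adapted ℱ a) (hb_adapted : Adapted ℱ b)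
    (ha_int : ∀ t, Integrable (a t) P) (hb_int : ∀ t, Integrable (b t) P) (hd : Summable d)
    (hdescent : ∀ t, ∀ᵐ ω ∂P, (P[a (t + 1) | ℱ t]) ω ≤ a t ω - b t ω + d t) :
    ∀ᵐ ω ∂P, (∃ l, Tendsto (fun t => a t ω) atTop (𝓝 l)) ∧ Summable fun t => b t ω := by
  have hX := supermartingale_robbinsSiegmundProcess ha_adapted hb_adapted ha_int hb_int hdescent
  filter_upwards [hX.exists_ae_tendsto_of_ae_le fun t =>
    ae_of_all _ (neg_tsum_abs_le_robbinsSiegmundProcess ha_nonneg hb_nonneg hd t)] with ω ⟨l, hl⟩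
  exact exists_tendsto_and_summable_of_tendsto_add_sum_sub (ha_nonneg · ω) (hb_nonneg · ω) hd hl

end RobbinsSiegmund

theorem robbins_siegmund_polk_general
    {Ω : Type*} {m0 : MeasurableSpace Ω} (P : Measure Ω) [IsProbabilityMeasure P]
    (ℱ : Filtration ℕ m0)
    (a b : ℕ → Ω → ℝ)
    (ha_nonneg : ∀ t ω, 0 ≤ a t ω) (hb_nonneg : ∀ t ω, 0 ≤ b t ω)
    (ha_adapted : Adapted ℱ a) (hb_adapted : Adapted ℱ b)
    (ha_int : ∀ t, Integrable (a t) P) (hb_int : ∀ t, Integrable (b t) P)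
    (c : ℝ)
    (η : ℕ → ℝ) (hηsq : Summable fun t => η t ^ 2)
    (hdescent : ∀ t, ∀ᵐ ω ∂P,
      (P[a (t + 1) | ℱ t]) ω ≤ a t ω - b t ω + c * η t ^ 2) :
    (∀ᵐ ω ∂P, (∃ l : ℝ, Tendsto (fun t => a t ω) atTop (nhds l)) ∧
      Summable fun t => b t ω) ∧
    (∀ r : ℕ → Ω → ℝ, (∀ t ω, 0 ≤ r t ω) → (∀ t ω, b t ω = 2 * η t * r t ω) →
      ¬ Summable η →
      ∀ᵐ ω ∂P, Filter.liminf (fun t => r t ω) atTop = 0) := by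
  have hconv := robbins_siegmund ha_nonneg hb_nonneg ha_adapted hb_adapted ha_int hb_int
    (hηsq.mul_left c) hdescent
  refine ⟨hconv, fun r hr hbr hη => ?_⟩
  filter_upwards [hconv] with ω ⟨_, hb_sum⟩
  have hηr : Summable fun t => η t * r t ω :=
    (hb_sum.div_const 2).congr fun t => by rw [hbr]; ring
  exact liminf_eq_zero_of_summable_mul_of_not_summable (hr · ω) hηr hη

/-- **Supermartingale (Robbins–Siegmund type) lemma for the diminishing
step-size analysis.** If `(a_t)` and `(b_t)` are nonnegative adapted processes,
`c ≥ 0`, `η_t ≥ 0` with `Σ η_t² < ∞`, and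
`E[a_{t+1} | F_t] ≤ a_t − b_t + c η_t²` a.s. for every `t`, then `a_t` converges
a.s. to a finite limit and `Σ_t b_t < ∞` a.s.; if in addition `b_t = 2η_t r_t`
with `r_t ≥ 0` and `Σ_t η_t = ∞`, then `liminf_{t→∞} r_t = 0` a.s. -/
theorem robbins_siegmund_polk
    {Ω : Type*} {m0 : MeasurableSpace Ω} (P : Measure Ω) [IsProbabilityMeasure P]
    (ℱ : Filtration ℕ m0)
    (a b : ℕ → Ω → ℝ)
    (ha_nonneg : ∀ t ω, 0 ≤ a t ω) (hb_nonneg : ∀ t ω, 0 ≤ b t ω)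
    (ha_adapted : Adapted ℱ a) (hb_adapted : Adapted ℱ b)
    (ha_int : ∀ t, Integrable (a t) P) (hb_int : ∀ t, Integrable (b t) P)
    (c : ℝ) (hc : 0 ≤ c)
    (η : ℕ → ℝ) (hη_nonneg : ∀ t, 0 ≤ η t) (hηsq : Summable fun t => η t ^ 2)
    (hdescent : ∀ t, ∀ᵐ ω ∂P,
      (P[a (t + 1) | ℱ t]) ω ≤ a t ω - b t ω + c * η t ^ 2) :
    (∀ᵐ ω ∂P, (∃ l : ℝ, Tendsto (fun t => a t ω) atTop (nhds l)) ∧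
      Summable fun t => b t ω) ∧
    (∀ r : ℕ → Ω → ℝ, (∀ t ω, 0 ≤ r t ω) → (∀ t ω, b t ω = 2 * η t * r t ω) →
      ¬ Summable η →
      ∀ᵐ ω ∂P, Filter.liminf (fun t => r t ω) atTop = 0) :=
  robbins_siegmund_polk_general P ℱ a b ha_nonneg hb_nonneg ha_adapted hb_adapted ha_int hb_int c η
    hηsq hdescent
end

section
/- Stopping-process lemma for the constant step-size analysis: on a filtered probability space let (d_t) be a nonnegative adapted real-valued process satisfying E[d_{t+1}² | F_t] ≤ (1 − ηλ) d_t² + 2ε d_t + η² σ² almost surely for all t, where η, λ > 0 with ηλ < 1, ε ≥ 0, σ ≥ 0. Then liminf_{t→∞} d_t ≤ Δ almost surely, where Δ = (ε + √(ε² + λη³σ²))/(λη). -/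
/-!
Write `Δ` for the larger root of `q x = ηλ x² - 2εx - η²σ²`, so that the assumed bound reads
`E[d_{t+1}² | F_t] ≤ d_t² - q(d_t)`. Fix `δ > 0`. Since `q` is increasing beyond `Δ`, the square
`d_t²` drops in conditional mean by at least `c = q(Δ + δ) > 0` at every step on which
`d_t ≥ Δ + δ`. On the event that this holds for all `t ≥ n`, integrating `k` steps gives
`k · c · P(event) ≤ E[d_n²]` for every `k`, so the event is null. A countable union over `n` and
over `δ = 1/(m+1)` yields `liminf d_t ≤ Δ` almost surely.
-/

open MeasureTheory Filter

theorem exists_pos_forall_le_sq_sub {η lam : ℝ} (hη : 0 < η) (hlam : 0 < lam) (ε σ : ℝ)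
    {δ : ℝ} (hδ : 0 < δ) :
    ∃ c > 0, ∀ x, (ε + Real.sqrt (ε ^ 2 + lam * η ^ 3 * σ ^ 2)) / (lam * η) + δ ≤ x →
      (1 - η * lam) * x ^ 2 + 2 * ε * x + η ^ 2 * σ ^ 2 ≤ x ^ 2 - c := by
  set s := Real.sqrt (ε ^ 2 + lam * η ^ 3 * σ ^ 2)
  set Δ := (ε + s) / (lam * η)
  have hs : 0 ≤ s := Real.sqrt_nonneg _
  have hs_sq : s ^ 2 = ε ^ 2 + lam * η ^ 3 * σ ^ 2 := Real.sq_sqrt (by positivity)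
  have hηlam : 0 < η * lam := mul_pos hη hlam
  have hΔ : η * lam * Δ = ε + s := by
    simp only [Δ]
    field_simp
  have hroot : η * lam * Δ ^ 2 - 2 * ε * Δ - η ^ 2 * σ ^ 2 = 0 := by
    refine (mul_eq_zero.1 ?_).resolve_left hηlam.ne'
    linear_combination (η * lam * Δ - ε + s) * hΔ + hs_sq
  refine ⟨η * lam * (Δ + δ) ^ 2 - 2 * ε * (Δ + δ) - η ^ 2 * σ ^ 2, ?_, fun x hx => ?_⟩
  · have hgap : η * lam * (Δ + δ) ^ 2 - 2 * ε * (Δ + δ) - η ^ 2 * σ ^ 2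
        = 2 * δ * s + η * lam * δ ^ 2 := by
      linear_combination hroot + 2 * δ * hΔ
    rw [hgap]
    positivity
  · -- `q x - q (Δ + δ) = (x - (Δ + δ)) (ηλ (x + Δ + δ) - 2ε)`, and the second factor is `≥ 2s`
    have hmono : 0 ≤ (x - (Δ + δ)) * (η * lam * (x + Δ + δ) - 2 * ε) :=
      mul_nonneg (by linarith) (by nlinarith)
    linarith [hmono]

section Drift

variable {Ω : Type*} {m0 : MeasurableSpace Ω} {P : Measure Ω} [IsFiniteMeasure P]

theorem setIntegral_le_sub_of_ae_condExp_le_sub {m : MeasurableSpace Ω} (hm : m ≤ m0)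
    {X Z : Ω → ℝ} (hX : Integrable X P) (hZ : Integrable Z P) {s : Set Ω}
    (hs : MeasurableSet[m] s) {c : ℝ} (h : ∀ᵐ ω ∂P, ω ∈ s → P[X|m] ω ≤ Z ω - c) :
    ∫ ω in s, X ω ∂P ≤ ∫ ω in s, Z ω ∂P - c * P.real s := by
  calc ∫ ω in s, X ω ∂P = ∫ ω in s, P[X|m] ω ∂P := (setIntegral_condExp hm hX hs).symm
    _ ≤ ∫ ω in s, (Z ω - c) ∂P :=
      setIntegral_mono_on_ae integrable_condExp.integrableOn
        (hZ.sub (integrable_const c)).integrableOn (hm s hs) h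
    _ = ∫ ω in s, Z ω ∂P - c * P.real s := by
      rw [integral_sub hZ.integrableOn (integrable_const c).integrableOn, setIntegral_const,
        smul_eq_mul, mul_comm]

theorem measure_iInter_eq_zero_of_condExp_le_sub (ℱ : Filtration ℕ m0) {Y : ℕ → Ω → ℝ}
    (hY_nonneg : ∀ t, 0 ≤ᵐ[P] Y t) (hY_int : ∀ t, Integrable (Y t) P)
    {B : ℕ → Set Ω} (hB_anti : Antitone B) (hB_meas : ∀ t, MeasurableSet[ℱ t] (B t))
    {c : ℝ} (hc : 0 < c) (n : ℕ)
    (hdrift : ∀ t, n ≤ t → ∀ᵐ ω ∂P, ω ∈ B t → P[Y (t + 1)|ℱ t] ω ≤ Y t ω - c) :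
    P (⋂ t, B t) = 0 := by
  set I := ⋂ t, B t
  have hstep : ∀ t, n ≤ t →
      ∫ ω in B (t + 1), Y (t + 1) ω ∂P + c * P.real I ≤ ∫ ω in B t, Y t ω ∂P := by
    intro t ht
    have hshrink : ∫ ω in B (t + 1), Y (t + 1) ω ∂P ≤ ∫ ω in B t, Y (t + 1) ω ∂P :=
      setIntegral_mono_set (hY_int _).integrableOn (ae_restrict_of_ae (hY_nonneg _))
        (hB_anti t.le_succ).eventuallyLE
    have hdecrease := setIntegral_le_sub_of_ae_condExp_le_sub (ℱ.le t) (hY_int (t + 1))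
      (hY_int t) (hB_meas t) (hdrift t ht)
    have hI : c * P.real I ≤ c * P.real (B t) :=
      mul_le_mul_of_nonneg_left (measureReal_mono (Set.iInter_subset B t)) hc.le
    linarith
  have hchain : ∀ k : ℕ,
      ∫ ω in B (n + k), Y (n + k) ω ∂P + k * (c * P.real I) ≤ ∫ ω in B n, Y n ω ∂P := by
    intro k
    induction k with
    | zero => simp
    | succ k ih =>
      have hnext := hstep (n + k) (Nat.le_add_right n k)
      rw [← add_assoc, Nat.cast_succ]
      linarith
  have hbound : ∀ k : ℕ, k * (c * P.real I) ≤ ∫ ω in B n, Y n ω ∂P := fun k =>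
    le_of_add_le_of_nonneg_right (hchain k)
      (setIntegral_nonneg_of_ae_restrict (ae_restrict_of_ae (hY_nonneg _)))
  rw [← measureReal_eq_zero_iff]
  by_contra hI
  have hpos : 0 < c * P.real I := mul_pos hc (measureReal_nonneg.lt_of_ne' hI)
  obtain ⟨k, hk⟩ := exists_nat_gt ((∫ ω in B n, Y n ω ∂P) / (c * P.real I))
  rw [div_lt_iff₀ hpos] at hk
  linarith [hbound k]

theorem measure_eventually_ge_eq_zero_of_condExp_le_sub (ℱ : Filtration ℕ m0)
    {d Y : ℕ → Ω → ℝ} (hd : Adapted ℱ d)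
    (hY_nonneg : ∀ t, 0 ≤ᵐ[P] Y t) (hY_int : ∀ t, Integrable (Y t) P) {a c : ℝ} (hc : 0 < c)
    (hdrift : ∀ t, ∀ᵐ ω ∂P, a ≤ d t ω → P[Y (t + 1)|ℱ t] ω ≤ Y t ω - c) :
    P {ω | ∀ᶠ t in atTop, a ≤ d t ω} = 0 := by
  let B : ℕ → ℕ → Set Ω := fun n t => ⋂ s ∈ Set.Icc n t, {ω | a ≤ d s ω}
  have hsub : {ω | ∀ᶠ t in atTop, a ≤ d t ω} ⊆ ⋃ n, ⋂ t, B n t := by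
    intro ω hω
    obtain ⟨n, hn⟩ := eventually_atTop.1 hω
    exact Set.mem_iUnion.2 ⟨n, Set.mem_iInter.2 fun t => Set.mem_iInter₂.2 fun s hs => hn s hs.1⟩
  refine measure_mono_null hsub (measure_iUnion_null fun n => ?_)
  refine measure_iInter_eq_zero_of_condExp_le_sub ℱ hY_nonneg hY_int
    (fun t t' htt' => Set.biInter_mono (Set.Icc_subset_Icc_right htt') fun _ _ => subset_rfl)
    (fun t => MeasurableSet.biInter (Set.to_countable _) fun s hs =>
      ℱ.mono hs.2 _ (hd s measurableSet_Ici)) hc n fun t ht => ?_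
  filter_upwards [hdrift t] with ω hω hωB
  exact hω (Set.mem_iInter₂.1 hωB t ⟨ht, le_rfl⟩)

end Drift

theorem ae_liminf_le_of_measure_eventually_ge_eq_zero {Ω : Type*} {m0 : MeasurableSpace Ω}
    {P : Measure Ω} {d : ℕ → Ω → ℝ} {a : ℝ}
    (hbdd : ∀ ω, IsBoundedUnder (· ≥ ·) atTop fun t => d t ω)
    (htail : ∀ δ > 0, P {ω | ∀ᶠ t in atTop, a + δ ≤ d t ω} = 0) :
    ∀ᵐ ω ∂P, liminf (fun t => d t ω) atTop ≤ a := by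
  have hfreq : ∀ᵐ ω ∂P, ∀ m : ℕ, ∃ᶠ t in atTop, d t ω ≤ a + 1 / (m + 1) := by
    refine ae_all_iff.2 fun m => ae_iff.2 <| measure_mono_null (fun ω hω => ?_)
      (htail (1 / (m + 1)) Nat.one_div_pos_of_nat)
    simp only [Set.mem_ofPred_eq, not_frequently, not_le] at hω ⊢
    exact hω.mono fun t => le_of_lt
  filter_upwards [hfreq] with ω hω
  have hlim := (tendsto_one_div_add_atTop_nhds_zero_nat (𝕜 := ℝ)).const_add a
  rw [add_zero] at hlim
  exact ge_of_tendsto' hlim fun m => liminf_le_of_frequently_le (hω m) (hbdd ω)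

theorem polk_stopping_process_general
    {Ω : Type*} {m0 : MeasurableSpace Ω} (P : Measure Ω) [IsProbabilityMeasure P]
    (ℱ : Filtration ℕ m0)
    (d : ℕ → Ω → ℝ) (hd_nonneg : ∀ t ω, 0 ≤ d t ω)
    (hd_adapted : Adapted ℱ d)
    (hd_int : ∀ t, Integrable (fun ω => d t ω ^ 2) P)
    (η lam ε σ : ℝ) (hη : 0 < η) (hlam : 0 < lam)
    (hdescent : ∀ t, ∀ᵐ ω ∂P,
      (P[(fun ω' => d (t + 1) ω' ^ 2) | ℱ t]) ω
        ≤ (1 - η * lam) * d t ω ^ 2 + 2 * ε * d t ω + η ^ 2 * σ ^ 2) :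
    ∀ᵐ ω ∂P, Filter.liminf (fun t => d t ω) atTop
      ≤ (ε + Real.sqrt (ε ^ 2 + lam * η ^ 3 * σ ^ 2)) / (lam * η) := by
  refine ae_liminf_le_of_measure_eventually_ge_eq_zero
    (fun ω => isBoundedUnder_of_eventually_ge (Eventually.of_forall (hd_nonneg · ω)))
    fun δ hδ => ?_
  obtain ⟨c, hc, hgap⟩ := exists_pos_forall_le_sq_sub hη hlam ε σ hδ
  refine measure_eventually_ge_eq_zero_of_condExp_le_sub ℱ (Y := fun t ω => d t ω ^ 2)
    hd_adapted (fun t => Eventually.of_forall fun ω => sq_nonneg (d t ω)) hd_int hc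
    fun t => ?_
  filter_upwards [hdescent t] with ω hω hωδ
  exact hω.trans (hgap _ hωδ)

/-- **Stopping-process lemma for the constant step-size analysis.**
If `(d_t)` is a nonnegative adapted process with
`E[d_{t+1}² | F_t] ≤ (1 − ηλ) d_t² + 2ε d_t + η² σ²` a.s. for all `t`, where
`η, λ > 0`, `ηλ < 1`, `ε ≥ 0`, `σ ≥ 0`, then `liminf_{t→∞} d_t ≤ Δ` a.s., where
`Δ = (ε + √(ε² + λη³σ²))/(λη)`. -/
theorem polk_stopping_process
    {Ω : Type*} {m0 : MeasurableSpace Ω} (P : Measure Ω) [IsProbabilityMeasure P]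
    (ℱ : Filtration ℕ m0)
    (d : ℕ → Ω → ℝ) (hd_nonneg : ∀ t ω, 0 ≤ d t ω)
    (hd_adapted : Adapted ℱ d)
    (hd_int : ∀ t, Integrable (fun ω => d t ω ^ 2) P)
    (η lam ε σ : ℝ) (hη : 0 < η) (hlam : 0 < lam) (hηlam : η * lam < 1)
    (hε : 0 ≤ ε) (hσ : 0 ≤ σ)
    (hdescent : ∀ t, ∀ᵐ ω ∂P,
      (P[(fun ω' => d (t + 1) ω' ^ 2) | ℱ t]) ω
        ≤ (1 - η * lam) * d t ω ^ 2 + 2 * ε * d t ω + η ^ 2 * σ ^ 2) :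
    ∀ᵐ ω ∂P, Filter.liminf (fun t => d t ω) atTop
      ≤ (ε + Real.sqrt (ε ^ 2 + lam * η ^ 3 * σ ^ 2)) / (lam * η) :=
  polk_stopping_process_general P ℱ d hd_nonneg hd_adapted hd_int η lam ε σ hη hlam hdescent
end

section
/- Combined descent relation under the diminishing budget ε_t = η_t²: for each t, the POLK iterates satisfy E[‖f_{t+1} − f*‖_H² | F_t] ≤ ‖f_t − f*‖_H² − 2η_t (R(f_t) − R(f*)) + η_t² (4 C X₀/λ + σ²) almost surely. -/
/-!
Write `f_{t+1} - f* = (f_t - f*) - D` with `D = f_t - f_{t+1}` and expand the square. Conditionally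
on `F_t`, the last term `‖D‖²` contributes at most `η²σ²`. The step `D` is `η ∇̂_t` up to the budget
`η²`, so pulling the `F_t`-measurable factor `f_t - f*` out of the cross term and using
unbiasedness together with the first-order inequality of the convex `R` gives
`E[⟪f_t - f*, D⟫ | F_t] ≥ η (R f_t - R f*) - 2 (C X₀ / λ) η²`; here both `f_t` and `f*` lie in the
ball of radius `C X₀ / λ`, which projected regularized steps never leave since `|ℓ'| ≤ C`.
-/

open MeasureTheory Filter
open scoped RealInnerProductSpace NNReal

section

variable {H : Type*} [NormedAddCommGroup H] [InnerProductSpace ℝ H]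

theorem norm_le_of_inner_sub_self_eq_zero {v w : H} (h : ⟪w - v, v⟫ = 0) : ‖v‖ ≤ ‖w‖ := by
  rw [inner_sub_left, sub_eq_zero, real_inner_self_eq_norm_sq] at h
  have : ‖v‖ ^ 2 ≤ ‖w‖ * ‖v‖ := h ▸ real_inner_le_norm w v
  nlinarith [norm_nonneg v, norm_nonneg w]

theorem norm_regularized_step_le {lam η a B : ℝ} {f v : H} (hη : 0 ≤ η) (hηlam : η * lam ≤ 1)
    (hf : ‖f‖ ≤ B) (hav : |a| * ‖v‖ ≤ lam * B) : ‖(1 - η * lam) • f - (η * a) • v‖ ≤ B := by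
  calc ‖(1 - η * lam) • f - (η * a) • v‖
      ≤ (1 - η * lam) * ‖f‖ + η * (|a| * ‖v‖) := by
        refine (norm_sub_le _ _).trans_eq ?_
        rw [norm_smul, norm_smul, Real.norm_of_nonneg (by linarith), Real.norm_eq_abs, abs_mul,
          abs_of_nonneg hη, mul_assoc]
    _ ≤ (1 - η * lam) * B + η * (lam * B) := by gcongr
    _ = B := by ring

theorem norm_le_of_regularized_projected_steps {lam B : ℝ} {η a : ℕ → ℝ} {v f : ℕ → H}
    (hf0 : f 0 = 0) (hB : 0 ≤ B) (hη : ∀ t, 0 ≤ η t) (hηlam : ∀ t, η t * lam ≤ 1)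
    (hav : ∀ t, |a t| * ‖v t‖ ≤ lam * B)
    (horth : ∀ t, ⟪((1 - η t * lam) • f t - (η t * a t) • v t) - f (t + 1), f (t + 1)⟫ = 0) :
    ∀ t, ‖f t‖ ≤ B
  | 0 => by simpa [hf0] using hB
  | t + 1 => (norm_le_of_inner_sub_self_eq_zero (horth t)).trans <|
      norm_regularized_step_le (hη t) (hηlam t)
        (norm_le_of_regularized_projected_steps hf0 hB hη hηlam hav horth t) (hav t)

theorem ConvexOn.add_inner_sub_le_of_hasGradientAt [CompleteSpace H] {R : H → ℝ}
    (hR : ConvexOn ℝ Set.univ R) {p q g : H} (hg : HasGradientAt R g p) :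
    R p + ⟪g, q - p⟫ ≤ R q := by
  have hline : ConvexOn ℝ Set.univ (R ∘ AffineMap.lineMap p q) :=
    hR.comp_affineMap (AffineMap.lineMap p q)
  have hderiv : HasDerivAt (R ∘ AffineMap.lineMap p q) ⟪g, q - p⟫ (0 : ℝ) := by
    have := hasGradientAt_iff_hasFDerivAt.mp hg
    rw [← AffineMap.lineMap_apply_zero (k := ℝ) p q] at this
    exact this.comp_hasDerivAt 0 AffineMap.hasDerivAt_lineMap
  have := hline.le_slope_of_hasDerivAt (Set.mem_univ 0) (Set.mem_univ 1) zero_lt_one hderiv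
  simp only [slope_def_field, Function.comp_apply, AffineMap.lineMap_apply_one,
    AffineMap.lineMap_apply_zero, sub_zero, div_one] at this
  linarith

theorem quadratic_coeff_eq_zero_of_three_roots {a₀ a₁ a₂ x y z : ℝ} (hxy : x < y) (hyz : y < z)
    (hx : a₀ + a₁ * x + a₂ * x ^ 2 = 0) (hy : a₀ + a₁ * y + a₂ * y ^ 2 = 0)
    (hz : a₀ + a₁ * z + a₂ * z ^ 2 = 0) : a₂ = 0 := by
  have hxy' : a₁ + a₂ * (x + y) = 0 := (mul_eq_zero.mp
    (by linear_combination hx - hy : (x - y) * (a₁ + a₂ * (x + y)) = 0)).resolve_left (by linarith)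
  have hyz' : a₁ + a₂ * (y + z) = 0 := (mul_eq_zero.mp
    (by linear_combination hy - hz : (y - z) * (a₁ + a₂ * (y + z)) = 0)).resolve_left (by linarith)
  exact (mul_eq_zero.mp (by linear_combination hxy' - hyz' : a₂ * (x - z) = 0)).resolve_right
    (by linarith)

/-- The Bochner integral is the junk value `0` wherever `h s` is not integrable, so `s ↦ ∫ h s`
need not be convex; but a strictly concave quadratic vanishes at most twice, which leaves enough
points where the midpoint inequality does apply. -/
theorem integral_ne_strictConcave_quadratic {α : Type*} [MeasurableSpace α] {μ : Measure α}
    {h : ℝ → α → ℝ} (hh : ∀ a, ConvexOn ℝ Set.univ (h · a)) {a₀ a₁ a₂ : ℝ} (ha₂ : a₂ < 0) :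
    ¬ ∀ s ∈ Set.Icc (0 : ℝ) 1, ∫ a, h s a ∂μ = a₀ + a₁ * s + a₂ * s ^ 2 := by
  intro hq
  set q : ℝ → ℝ := fun s => a₀ + a₁ * s + a₂ * s ^ 2
  have hint : ∀ s ∈ Set.Icc (0 : ℝ) 1, q s ≠ 0 → Integrable (h s) μ := fun s hs hs0 => by
    by_contra hni
    exact hs0 ((hq s hs).symm.trans (integral_undef hni))
  have hroot : ∀ a b, 0 ≤ a → a < b → b ≤ 1 →
      ∃ s, a ≤ s ∧ s ≤ b ∧ q s = 0 := by
    intro a b ha hab hb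
    by_contra! hne
    have hIa := hint a ⟨ha, by linarith⟩ (hne a le_rfl hab.le)
    have hIb := hint b ⟨by linarith, hb⟩ (hne b hab.le le_rfl)
    have hm : (a + b) / 2 ∈ Set.Icc (0 : ℝ) 1 := ⟨by linarith, by linarith⟩
    have hIm := hint _ hm (hne _ (by linarith) (by linarith))
    have hmid : ∀ x, h ((a + b) / 2) x ≤ 2⁻¹ * h a x + 2⁻¹ * h b x := fun x => by
      have := (hh x).2 (Set.mem_univ a) (Set.mem_univ b) (by norm_num : (0 : ℝ) ≤ 2⁻¹)
        (by norm_num : (0 : ℝ) ≤ 2⁻¹) (by norm_num)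
      rwa [smul_eq_mul, smul_eq_mul, smul_eq_mul, smul_eq_mul, ← mul_add, inv_mul_eq_div] at this
    have := integral_mono hIm ((hIa.const_mul _).add (hIb.const_mul _)) hmid
    simp only [Pi.add_apply] at this
    rw [integral_add (hIa.const_mul _) (hIb.const_mul _), integral_const_mul, integral_const_mul,
      hq a ⟨ha, by linarith⟩, hq b ⟨by linarith, hb⟩, hq _ hm] at this
    nlinarith [mul_pos (neg_pos.mpr ha₂) (pow_pos (sub_pos.mpr hab) 2)]
  obtain ⟨s₁, -, hs₁, hq₁⟩ := hroot 0 (1 / 4) le_rfl (by norm_num) (by norm_num)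
  obtain ⟨s₂, hs₂, hs₂', hq₂⟩ := hroot (3 / 8) (1 / 2) (by norm_num) (by norm_num) (by norm_num)
  obtain ⟨s₃, hs₃, -, hq₃⟩ := hroot (5 / 8) (3 / 4) (by norm_num) (by norm_num) (by norm_num)
  exact ha₂.ne (quadratic_coeff_eq_zero_of_three_roots (by linarith) (by linarith) hq₁ hq₂ hq₃)

theorem eq_of_regularizedRisk_eq_min {X Y : Type*} [MeasurableSpace X] [MeasurableSpace Y]
    {φ : X → H} {ℓ : ℝ → Y → ℝ}
    (hconv : ∀ y, ConvexOn ℝ Set.univ fun z => ℓ z y) {μ : Measure (X × Y)} {lam : ℝ}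
    (hlam : 0 < lam) {R : H → ℝ} (hR : ∀ f, R f = (∫ p, ℓ ⟪f, φ p.1⟫ p.2 ∂μ) + lam / 2 * ‖f‖ ^ 2)
    (hRconv : ConvexOn ℝ Set.univ R) {fstar p : H} (hmin : ∀ f, R fstar ≤ R f)
    (hp : R p = R fstar) : p = fstar := by
  by_contra hne
  have hd : 0 < ‖p - fstar‖ := norm_pos_iff.mpr (sub_ne_zero.mpr hne)
  refine integral_ne_strictConcave_quadratic (μ := μ)
    (h := fun s a => ℓ ⟪AffineMap.lineMap fstar p s, φ a.1⟫ a.2) (fun a => ?_)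
    (a₀ := R fstar - lam / 2 * ‖fstar‖ ^ 2) (a₁ := -(lam * ⟪fstar, p - fstar⟫))
    (a₂ := -(lam / 2 * ‖p - fstar‖ ^ 2)) (by have := pow_pos hd 2; nlinarith) fun s hs => ?_
  · have : (fun s : ℝ => ℓ ⟪AffineMap.lineMap fstar p s, φ a.1⟫ a.2)
        = (fun z => ℓ z a.2) ∘ AffineMap.lineMap ⟪fstar, φ a.1⟫ ⟪p, φ a.1⟫ := by
      ext s
      simp only [Function.comp_apply, AffineMap.lineMap_apply_module, inner_add_left,
        real_inner_smul_left, smul_eq_mul]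
    rw [this]
    exact (hconv a.2).comp_affineMap _
  · have hRs : R (AffineMap.lineMap fstar p s) = R fstar := by
      refine le_antisymm ?_ (hmin _)
      have := hRconv.le_on_segment (Set.mem_univ _) (Set.mem_univ _)
        (lineMap_mem_segment ℝ fstar p hs)
      rwa [hp, max_self] at this
    have hnorm : ‖AffineMap.lineMap fstar p s‖ ^ 2
        = ‖fstar‖ ^ 2 + 2 * s * ⟪fstar, p - fstar⟫ + s ^ 2 * ‖p - fstar‖ ^ 2 := by
      rw [AffineMap.lineMap_apply_module', add_comm, norm_add_sq_real, real_inner_smul_right,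
        norm_smul, Real.norm_eq_abs, mul_pow, sq_abs]
      ring
    have := hR (AffineMap.lineMap fstar p s)
    rw [hRs, hnorm] at this
    linarith

section CondExp

variable {Ω : Type*} {m m0 : MeasurableSpace Ω} {P : Measure Ω} [IsFiniteMeasure P]

theorem integrable_norm_sq_of_le {E : Type*} [NormedAddCommGroup E] {f : Ω → E} {c : ℝ}
    (hf : AEStronglyMeasurable f P) (hfc : ∀ ω, ‖f ω‖ ≤ c) : Integrable (fun ω => ‖f ω‖ ^ 2) P :=
  Integrable.of_bound (hf.norm.pow 2) (c ^ 2) <| ae_of_all _ fun ω => by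
    rw [norm_pow, norm_norm]
    exact pow_le_pow_left₀ (norm_nonneg _) (hfc ω) 2

theorem condExp_norm_sub_sq_ae_eq (hm : m ≤ m0) {g D : Ω → H} {c : ℝ}
    (hg : StronglyMeasurable[m] g) (hD : StronglyMeasurable[m0] D) (hgc : ∀ ω, ‖g ω‖ ≤ c)
    (hDc : ∀ ω, ‖D ω‖ ≤ c) :
    P[fun ω => ‖g ω - D ω‖ ^ 2 | m] =ᵐ[P]
      fun ω => ‖g ω‖ ^ 2 - 2 * P[fun ω => ⟪g ω, D ω⟫ | m] ω + P[fun ω => ‖D ω‖ ^ 2 | m] ω := by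
  have hg_int := integrable_norm_sq_of_le (P := P) (hg.mono hm).aestronglyMeasurable hgc
  have hD_int := integrable_norm_sq_of_le (P := P) hD.aestronglyMeasurable hDc
  have hgD_int : Integrable (fun ω => ⟪g ω, D ω⟫) P :=
    (innerSL ℝ).integrable_of_bilin_of_bdd_left c (hg.mono hm).aestronglyMeasurable
      (ae_of_all _ hgc) (Integrable.of_bound hD.aestronglyMeasurable c (ae_of_all _ hDc))
  have hsplit : (fun ω => ‖g ω - D ω‖ ^ 2)
      = (fun ω => ‖g ω‖ ^ 2) - (2 : ℝ) • (fun ω => ⟪g ω, D ω⟫) + fun ω => ‖D ω‖ ^ 2 := by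
    ext ω
    simp only [Pi.add_apply, Pi.sub_apply, Pi.smul_apply, smul_eq_mul, norm_sub_sq_real]
  rw [hsplit]
  filter_upwards [condExp_add (hg_int.sub (hgD_int.smul (2 : ℝ))) hD_int m,
    condExp_sub hg_int (hgD_int.smul (2 : ℝ)) m, condExp_smul (2 : ℝ) (fun ω => ⟪g ω, D ω⟫) m]
    with ω h_add h_sub h_smul
  rw [h_add, Pi.add_apply, h_sub, Pi.sub_apply, h_smul,
    condExp_of_stronglyMeasurable hm (by exact hg.norm.pow 2 : StronglyMeasurable[m] _) hg_int]
  rfl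

theorem le_condExp_inner_of_norm_smul_sub_le [CompleteSpace H] (hm : m ≤ m0) {g G D : Ω → H}
    {c η δ : ℝ} (hg : StronglyMeasurable[m] g) (hgc : ∀ ω, ‖g ω‖ ≤ c) (hG : Integrable G P)
    (hD : Integrable D P) (hGD : ∀ ω, ‖η • G ω - D ω‖ ≤ δ) :
    ∀ᵐ ω ∂P, η * ⟪g ω, P[G | m] ω⟫ - c * δ ≤ P[fun ω => ⟪g ω, D ω⟫ | m] ω := by
  have hbilin : ∀ {F : Ω → H}, Integrable F P → Integrable (fun ω => ⟪g ω, F ω⟫) P :=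
    fun hF => (innerSL ℝ).integrable_of_bilin_of_bdd_left c (hg.mono hm).aestronglyMeasurable
      (ae_of_all _ hgc) hF
  have hpoint : ∀ ω, η * ⟪g ω, G ω⟫ - c * δ ≤ ⟪g ω, D ω⟫ := fun ω => by
    have h := (real_inner_le_norm (g ω) (η • G ω - D ω)).trans
      (mul_le_mul (hgc ω) (hGD ω) (norm_nonneg _) ((norm_nonneg _).trans (hgc ω)))
    rw [inner_sub_right, real_inner_smul_right] at h
    linarith
  have hlow : Integrable (η • (fun ω => ⟪g ω, G ω⟫) - fun _ => c * δ) P :=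
    ((hbilin hG).smul η).sub (integrable_const _)
  have hpull : P[fun ω => ⟪g ω, G ω⟫ | m] =ᵐ[P] fun ω => ⟪g ω, P[G | m] ω⟫ :=
    condExp_stronglyMeasurable_bilin_of_bound (innerSL ℝ) hm hg hG c (ae_of_all _ hgc)
  filter_upwards [condExp_mono (m := m) hlow (hbilin hD) (ae_of_all _ hpoint),
    condExp_sub ((hbilin hG).smul η) (integrable_const (c * δ)) m,
    condExp_smul η (fun ω => ⟪g ω, G ω⟫) m,
    hpull] with ω h_mono h_sub h_smul h_pull
  rwa [h_sub, Pi.sub_apply, h_smul, Pi.smul_apply, h_pull, condExp_const hm] at h_mono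

theorem le_condExp_inner_of_inexact_gradient_step [CompleteSpace H] (hm : m ≤ m0)
    {R : H → ℝ} {gradR : H → H} (hgrad : ∀ f, HasGradientAt R (gradR f) f)
    (hRconv : ConvexOn ℝ Set.univ R) {fstar : H} (hmin : ∀ f, R fstar ≤ R f)
    (huniq : ∀ f, R f = R fstar → f = fstar) {x x' G : Ω → H} {c η δ : ℝ}
    (hx : StronglyMeasurable[m] x) (hx' : StronglyMeasurable[m0] x')
    (hxc : ∀ ω, ‖x ω - fstar‖ ≤ c) (hx'c : ∀ ω, ‖x ω - x' ω‖ ≤ c) (hη : 0 ≤ η)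
    (hstep : ∀ ω, ‖x' ω - (x ω - η • G ω)‖ ≤ δ)
    (hunb : P[G | m] =ᵐ[P] fun ω => gradR (x ω)) :
    ∀ᵐ ω ∂P, η * (R (x ω) - R fstar) - c * δ
      ≤ P[fun ω => ⟪x ω - fstar, x ω - x' ω⟫ | m] ω := by
  by_cases hG : Integrable G P
  · have hD : Integrable (fun ω => x ω - x' ω) P :=
      Integrable.of_bound ((hx.mono hm).sub hx').aestronglyMeasurable c (ae_of_all _ hx'c)
    have hGD : ∀ ω, ‖η • G ω - (x ω - x' ω)‖ ≤ δ := fun ω => by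
      rw [show η • G ω - (x ω - x' ω) = x' ω - (x ω - η • G ω) by abel]
      exact hstep ω
    have hg : StronglyMeasurable[m] (fun ω => x ω - fstar) := hx.sub stronglyMeasurable_const
    filter_upwards [le_condExp_inner_of_norm_smul_sub_le hm hg hxc hG hD hGD, hunb] with ω hcross hω
    have hfirst : R (x ω) - R fstar ≤ ⟪x ω - fstar, gradR (x ω)⟫ := by
      have := hRconv.add_inner_sub_le_of_hasGradientAt (q := fstar) (hgrad (x ω))
      rw [← neg_sub, inner_neg_right, real_inner_comm] at this
      linarith
    rw [hω] at hcross
    linarith [mul_le_mul_of_nonneg_left hfirst hη]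
  · -- `P[G | m]` is then the junk value `0`, so the iterate is a.s. a critical point of `R`.
    have hxstar : ∀ᵐ ω ∂P, x ω = fstar := by
      filter_upwards [hunb] with ω hω
      rw [condExp_of_not_integrable hG] at hω
      refine huniq _ (le_antisymm ?_ (hmin _))
      simpa [← hω] using hRconv.add_inner_sub_le_of_hasGradientAt (q := fstar) (hgrad (x ω))
    have hzero : P[fun ω => ⟪x ω - fstar, x ω - x' ω⟫ | m] =ᵐ[P] 0 := by
      refine (condExp_congr_ae (g := 0) ?_).trans condExp_zero.eventuallyEq
      filter_upwards [hxstar] with ω hω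
      simp [hω]
    filter_upwards [hzero, hxstar] with ω h0 hω
    rw [h0, hω, sub_self, mul_zero, Pi.zero_apply, zero_sub, neg_nonpos]
    exact mul_nonneg ((norm_nonneg _).trans (hxc ω)) ((norm_nonneg _).trans (hstep ω))

theorem condExp_norm_sub_sq_le_of_inexact_gradient_step [CompleteSpace H] (hm : m ≤ m0)
    {R : H → ℝ} {gradR : H → H} (hgrad : ∀ f, HasGradientAt R (gradR f) f)
    (hRconv : ConvexOn ℝ Set.univ R) {fstar : H} (hmin : ∀ f, R fstar ≤ R f)
    (huniq : ∀ f, R f = R fstar → f = fstar) {x x' G : Ω → H} {B η δ σ : ℝ}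
    (hx : StronglyMeasurable[m] x) (hx' : StronglyMeasurable[m0] x')
    (hxB : ∀ ω, ‖x ω‖ ≤ B) (hx'B : ∀ ω, ‖x' ω‖ ≤ B) (hfstarB : ‖fstar‖ ≤ B) (hη : 0 < η)
    (hstep : ∀ ω, ‖x' ω - (x ω - η • G ω)‖ ≤ δ)
    (hunb : P[G | m] =ᵐ[P] fun ω => gradR (x ω))
    (hvar : ∀ᵐ ω ∂P, P[fun ω' => ‖η⁻¹ • (x ω' - x' ω')‖ ^ 2 | m] ω ≤ σ ^ 2) :
    ∀ᵐ ω ∂P, P[fun ω' => ‖x' ω' - fstar‖ ^ 2 | m] ω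
      ≤ ‖x ω - fstar‖ ^ 2 - 2 * η * (R (x ω) - R fstar) + 4 * B * δ + η ^ 2 * σ ^ 2 := by
  have hxc : ∀ ω, ‖x ω - fstar‖ ≤ 2 * B := fun ω =>
    (norm_sub_le _ _).trans (by linarith [hxB ω])
  have hx'c : ∀ ω, ‖x ω - x' ω‖ ≤ 2 * B := fun ω =>
    (norm_sub_le _ _).trans (by linarith [hxB ω, hx'B ω])
  have hsplit : (fun ω => ‖x' ω - fstar‖ ^ 2)
      = fun ω => ‖(x ω - fstar) - (x ω - x' ω)‖ ^ 2 := by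
    ext ω
    congr 2
    abel
  have hD2 : (fun ω => ‖x ω - x' ω‖ ^ 2)
      = η ^ 2 • fun ω => ‖η⁻¹ • (x ω - x' ω)‖ ^ 2 := by
    ext ω
    rw [Pi.smul_apply, smul_eq_mul, norm_smul, mul_pow, norm_inv, Real.norm_of_nonneg hη.le,
      ← mul_assoc, ← mul_pow, mul_inv_cancel₀ hη.ne', one_pow, one_mul]
  have hg : StronglyMeasurable[m] (fun ω => x ω - fstar) := hx.sub stronglyMeasurable_const
  have hD : StronglyMeasurable[m0] (fun ω => x ω - x' ω) := (hx.mono hm).sub hx'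
  rw [hsplit]
  filter_upwards [condExp_norm_sub_sq_ae_eq hm hg hD hxc hx'c,
    le_condExp_inner_of_inexact_gradient_step hm hgrad hRconv hmin huniq hx hx' hxc hx'c hη.le
      hstep hunb,
    condExp_smul (m := m) (μ := P) (η ^ 2) (fun ω => ‖η⁻¹ • (x ω - x' ω)‖ ^ 2), hvar]
    with ω hexp hcross hsmul hvarω
  rw [hexp, hD2, hsmul, Pi.smul_apply, smul_eq_mul]
  nlinarith [mul_le_mul_of_nonneg_left hvarω (sq_nonneg η)]

end CondExp

end

theorem polk_combined_descent_diminishing_budget_general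
    {H : Type*} [NormedAddCommGroup H] [InnerProductSpace ℝ H] [CompleteSpace H]
    {X : Type*} [MeasurableSpace X]
    {Y : Type*} [MeasurableSpace Y]
    (φ : X → H) (X₀ : ℝ) (hφb : ∀ x, ‖φ x‖ ≤ X₀)
    (ℓ ℓ' : ℝ → Y → ℝ) (C : ℝ≥0)
    (hconv : ∀ y, ConvexOn ℝ Set.univ fun z => ℓ z y)
    (hlip : ∀ y, LipschitzWith C fun z => ℓ z y)
    (hderiv : ∀ z y, HasDerivAt (fun z' => ℓ z' y) (ℓ' z y) z)
    (μ : Measure (X × Y))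
    (lam : ℝ) (hlam : 0 < lam)
    (R : H → ℝ)
    (hR : ∀ f, R f = (∫ p, ℓ ⟪f, φ p.1⟫ p.2 ∂μ) + lam / 2 * ‖f‖ ^ 2)
    (gradR : H → H) (hgrad : ∀ f, HasGradientAt R (gradR f) f)
    (hRconv : ConvexOn ℝ Set.univ R)
    (fstar : H) (hfstar : ∀ f, R fstar ≤ R f)
    (hfstar_bound : ‖fstar‖ ≤ (C : ℝ) * X₀ / lam)
    {Ω : Type*} {m0 : MeasurableSpace Ω} (P : Measure Ω) [IsProbabilityMeasure P]
    (ℱ : Filtration ℕ m0)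
    (ξ : ℕ → Ω → X × Y)
    (η : ℕ → ℝ) (hηpos : ∀ t, 0 < η t) (hηlam : ∀ t, η t < 1 / lam)
    (ε : ℕ → ℝ) (hε : ∀ t, ε t = η t ^ 2)
    (f : ℕ → Ω → H) (hf0 : ∀ ω, f 0 ω = 0)
    (hadapted : StronglyAdapted ℱ f)
    -- `f (t+1) ω` is the orthogonal projection of the stochastic gradient step
    -- onto a closed linear subspace `V` of `H`:
    (hproj : ∀ t ω, ∃ V : Submodule ℝ H, IsClosed (V : Set H) ∧ f (t + 1) ω ∈ V ∧
      ∀ g ∈ V, ⟪((1 - η t * lam) • f t ω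
        - (η t * ℓ' ⟪f t ω, φ (ξ t ω).1⟫ (ξ t ω).2) • φ (ξ t ω).1) - f (t + 1) ω, g⟫ = 0)
    -- sparse approximation budget:
    (hbudget : ∀ t ω,
      ‖f (t + 1) ω - ((1 - η t * lam) • f t ω
        - (η t * ℓ' ⟪f t ω, φ (ξ t ω).1⟫ (ξ t ω).2) • φ (ξ t ω).1)‖ ≤ ε t)
    (σ : ℝ)
    -- unbiasedness of the regularized stochastic gradient:
    (hunbiased : ∀ t,
      P[(fun ω => ℓ' ⟪f t ω, φ (ξ t ω).1⟫ (ξ t ω).2 • φ (ξ t ω).1 + lam • f t ω) | ℱ t]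
        =ᵐ[P] fun ω => gradR (f t ω))
    -- finite conditional second moment of the projected stochastic gradient:
    (hvar : ∀ t, ∀ᵐ ω ∂P,
      (P[(fun ω' => ‖(η t)⁻¹ • (f t ω' - f (t + 1) ω')‖ ^ 2) | ℱ t]) ω ≤ σ ^ 2) :
    ∀ t, ∀ᵐ ω ∂P,
      (P[(fun ω' => ‖f (t + 1) ω' - fstar‖ ^ 2) | ℱ t]) ω
        ≤ ‖f t ω - fstar‖ ^ 2 - 2 * η t * (R (f t ω) - R fstar)
          + η t ^ 2 * (4 * (C : ℝ) * X₀ / lam + σ ^ 2) := by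
  set B := (C : ℝ) * X₀ / lam with hB
  have hℓ' : ∀ z y, |ℓ' z y| ≤ C := fun z y => by
    simpa using (hderiv z y).le_of_lipschitz (hlip y)
  have hbound : ∀ t ω, ‖f t ω‖ ≤ B := fun t ω =>
    norm_le_of_regularized_projected_steps (f := (f · ω))
      (a := fun s => ℓ' ⟪f s ω, φ (ξ s ω).1⟫ (ξ s ω).2) (v := fun s => φ (ξ s ω).1) (hf0 ω)
      ((norm_nonneg _).trans hfstar_bound) (fun t => (hηpos t).le)
      (fun t => ((lt_div_iff₀ hlam).mp (hηlam t)).le)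
      (fun t => by
        rw [hB, mul_div_cancel₀ _ hlam.ne']
        exact mul_le_mul (hℓ' _ _) (hφb _) (norm_nonneg _) C.coe_nonneg)
      (fun t => by
        obtain ⟨V, -, hmem, horth⟩ := hproj t ω
        exact horth _ hmem) t
  intro t
  have hstep : ∀ ω, ‖f (t + 1) ω - (f t ω - η t • (ℓ' ⟪f t ω, φ (ξ t ω).1⟫ (ξ t ω).2 • φ (ξ t ω).1
      + lam • f t ω))‖ ≤ η t ^ 2 := fun ω => by
    rw [← hε t]
    convert hbudget t ω using 3
    module
  filter_upwards [condExp_norm_sub_sq_le_of_inexact_gradient_step (ℱ.le t) hgrad hRconv hfstar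
    (fun p hp => eq_of_regularizedRisk_eq_min hconv hlam hR hRconv hfstar hp) (hadapted t)
    ((hadapted (t + 1)).mono (ℱ.le _)) (hbound t) (hbound (t + 1)) hfstar_bound (hηpos t) hstep
    (hunbiased t) (hvar t)] with ω hω
  exact hω.trans_eq (by rw [hB]; ring)

/-- **Combined descent relation under the diminishing budget `ε_t = η_t²`.**
For each `t`, the POLK iterates satisfy
`E[‖f_{t+1} − f*‖² | F_t] ≤ ‖f_t − f*‖² − 2η_t (R(f_t) − R(f*)) + η_t² (4CX₀/λ + σ²)`
almost surely. -/
theorem polk_combined_descent_diminishing_budget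
    {H : Type*} [NormedAddCommGroup H] [InnerProductSpace ℝ H] [CompleteSpace H]
    {X : Type*} [MetricSpace X] [CompactSpace X] [MeasurableSpace X]
    {Y : Type*} [MeasurableSpace Y]
    (φ : X → H) (hφc : Continuous φ) (X₀ : ℝ) (hφb : ∀ x, ‖φ x‖ ≤ X₀)
    (ℓ ℓ' : ℝ → Y → ℝ) (C : ℝ≥0)
    (hconv : ∀ y, ConvexOn ℝ Set.univ fun z => ℓ z y)
    (hlip : ∀ y, LipschitzWith C fun z => ℓ z y)
    (hderiv : ∀ z y, HasDerivAt (fun z' => ℓ z' y) (ℓ' z y) z)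
    (μ : Measure (X × Y)) [IsProbabilityMeasure μ]
    (lam : ℝ) (hlam : 0 < lam)
    (R : H → ℝ)
    (hR : ∀ f, R f = (∫ p, ℓ ⟪f, φ p.1⟫ p.2 ∂μ) + lam / 2 * ‖f‖ ^ 2)
    (gradR : H → H) (hgrad : ∀ f, HasGradientAt R (gradR f) f)
    (hRconv : ConvexOn ℝ Set.univ R)
    (fstar : H) (hfstar : ∀ f, R fstar ≤ R f)
    (hfstar_bound : ‖fstar‖ ≤ (C : ℝ) * X₀ / lam)
    {Ω : Type*} {m0 : MeasurableSpace Ω} (P : Measure Ω) [IsProbabilityMeasure P]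
    (ℱ : Filtration ℕ m0)
    (ξ : ℕ → Ω → X × Y)
    (hlaw : ∀ t, Measure.map (ξ t) P = μ)
    (hiid : ProbabilityTheory.iIndepFun ξ P)
    (hindep : ∀ t,
      ProbabilityTheory.Indep (MeasurableSpace.comap (ξ t) inferInstance) (ℱ t) P)
    (hmeas : ∀ t, Measurable[ℱ (t + 1)] (ξ t))
    (η : ℕ → ℝ) (hηpos : ∀ t, 0 < η t) (hηlam : ∀ t, η t < 1 / lam)
    (ε : ℕ → ℝ) (hε : ∀ t, ε t = η t ^ 2)
    (f : ℕ → Ω → H) (hf0 : ∀ ω, f 0 ω = 0)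
    (hadapted : StronglyAdapted ℱ f)
    -- `f (t+1) ω` is the orthogonal projection of the stochastic gradient step
    -- onto a closed linear subspace `V` of `H`:
    (hproj : ∀ t ω, ∃ V : Submodule ℝ H, IsClosed (V : Set H) ∧ f (t + 1) ω ∈ V ∧
      ∀ g ∈ V, ⟪((1 - η t * lam) • f t ω
        - (η t * ℓ' ⟪f t ω, φ (ξ t ω).1⟫ (ξ t ω).2) • φ (ξ t ω).1) - f (t + 1) ω, g⟫ = 0)
    -- sparse approximation budget:
    (hbudget : ∀ t ω,
      ‖f (t + 1) ω - ((1 - η t * lam) • f t ω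
        - (η t * ℓ' ⟪f t ω, φ (ξ t ω).1⟫ (ξ t ω).2) • φ (ξ t ω).1)‖ ≤ ε t)
    (σ : ℝ)
    -- unbiasedness of the regularized stochastic gradient:
    (hunbiased : ∀ t,
      P[(fun ω => ℓ' ⟪f t ω, φ (ξ t ω).1⟫ (ξ t ω).2 • φ (ξ t ω).1 + lam • f t ω) | ℱ t]
        =ᵐ[P] fun ω => gradR (f t ω))
    -- finite conditional second moment of the projected stochastic gradient:
    (hvar : ∀ t, ∀ᵐ ω ∂P,
      (P[(fun ω' => ‖(η t)⁻¹ • (f t ω' - f (t + 1) ω')‖ ^ 2) | ℱ t]) ω ≤ σ ^ 2) :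
    ∀ t, ∀ᵐ ω ∂P,
      (P[(fun ω' => ‖f (t + 1) ω' - fstar‖ ^ 2) | ℱ t]) ω
        ≤ ‖f t ω - fstar‖ ^ 2 - 2 * η t * (R (f t ω) - R fstar)
          + η t ^ 2 * (4 * (C : ℝ) * X₀ / lam + σ ^ 2) :=
  polk_combined_descent_diminishing_budget_general φ X₀ hφb ℓ ℓ' C hconv hlip hderiv μ lam hlam R hR
    gradR hgrad hRconv fstar hfstar hfstar_bound P ℱ ξ η hηpos hηlam ε hε f hf0 hadapted hproj
    hbudget σ hunbiased hvar
end
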